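/- arXiv:1203.0862 — 4 statements merged into one kernel-verified Lean document; each statement's English description precedes it below -/
import Mathlib

section
/- Under the Lipschitz and monotonicity assumptions, for every t ∈ [0,T] and every x ∈ ℝⁿ there exists exactly one solution of the forward–backward system with data (t,x); i.e., there is exactly one pair of continuous maps X,Y : [t,T] → ℝⁿ with X(s) = x + ∫_t^s f(r,X(r),Y(r)) dr and Y(s) = h(X(T)) + ∫_s^T g(r,X(r),Y(r)) dr for all s ∈ [t,T]. (Deterministic forward–backward existence and uniqueness, Lemma 5 of the paper.) -/
/-!
For two solutions of systems whose coefficients differ by at most `D`, the differences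
`U = X₁ - X₂`, `V = Y₁ - Y₂` satisfy `U t = 0` and, by monotonicity,
`d/ds ⟪U, V⟫ ≤ -c (‖U‖² + ‖V‖²) + D (‖U‖ + ‖V‖)` and `⟪U T, V T⟫ ≥ c ‖U T‖² - D ‖U T‖`.
Integrating bounds `‖U T‖` and `U, V` in `L²`, and then, through the Lipschitz bounds,
uniformly: `‖U‖, ‖V‖ ≤ K D` with `K` depending only on the constants and `T - t`.
With `D = 0` this is uniqueness.

Existence is proved by continuation in `α ∈ [0, 1]` (Peng–Wu): the coefficients
`α (f, g, h) + (1 - α) (-v, u, u)` satisfy the hypotheses with constants independent of `α`.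
At `α = 0` the system is linear and solved explicitly for every continuous forcing. If this
holds at `α`, the uniform stability estimate turns the passage to `α + δ`, for a fixed small
`δ > 0`, into a contraction on `C([t, T], E × E)`.
-/

open MeasureTheory Set intervalIntegral RealInnerProductSpace

noncomputable section

/-- `ℝⁿ` as a real inner product space. -/
abbrev Vec (n : ℕ) := EuclideanSpace ℝ (Fin n)

/-- A solution of the (deterministic) forward–backward system with data `(t, x)`:
a pair of maps `X, Y`, continuous on `[t, T]`, satisfying
`X s = x + ∫_t^s f r (X r) (Y r) dr` and `Y s = h (X T) + ∫_s^T g r (X r) (Y r) dr`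
for all `s ∈ [t, T]`. -/
def IsFBSol {n : ℕ} (T : ℝ)
    (f g : ℝ → Vec n → Vec n → Vec n) (h : Vec n → Vec n)
    (t : ℝ) (x : Vec n) (X Y : ℝ → Vec n) : Prop :=
  ContinuousOn X (Icc t T) ∧ ContinuousOn Y (Icc t T) ∧
  (∀ s ∈ Icc t T, X s = x + ∫ r in t..s, f r (X r) (Y r)) ∧
  (∀ s ∈ Icc t T, Y s = h (X T) + ∫ r in s..T, g r (X r) (Y r))

open Filter Topology

namespace ForwardBackward

theorem sq_integral_le_mul_integral_sq {w : ℝ → ℝ} {a b : ℝ} (hab : a ≤ b)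
    (hw : ContinuousOn w (Icc a b)) :
    (∫ r in a..b, w r) ^ 2 ≤ (b - a) * ∫ r in a..b, w r ^ 2 := by
  set m := ∫ r in a..b, w r
  set ℓ := b - a
  have hint : ∀ {k : ℝ → ℝ}, ContinuousOn k (Icc a b) → IntervalIntegrable k volume a b :=
    fun hk => hk.intervalIntegrable_of_Icc hab
  -- expand `0 ≤ ∫ (ℓ w - m)²`
  have hexpand : ∫ r in a..b, (ℓ * w r - m) ^ 2 = ℓ * (ℓ * (∫ r in a..b, w r ^ 2) - m ^ 2) := by
    have e : ∀ r, (ℓ * w r - m) ^ 2 = ℓ ^ 2 * w r ^ 2 - (2 * ℓ * m * w r - m ^ 2) := fun r => by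
      ring
    simp_rw [e]
    rw [intervalIntegral.integral_sub (hint (by fun_prop)) (hint (by fun_prop)),
      intervalIntegral.integral_sub (hint (by fun_prop)) intervalIntegrable_const,
      intervalIntegral.integral_const_mul, intervalIntegral.integral_const_mul,
      intervalIntegral.integral_const, smul_eq_mul]
    ring
  have hnonneg : 0 ≤ ℓ * (ℓ * (∫ r in a..b, w r ^ 2) - m ^ 2) :=
    hexpand ▸ intervalIntegral.integral_nonneg hab fun r _ => sq_nonneg _
  rcases hab.eq_or_lt with rfl | hlt
  · simp [m]
  · linarith [(mul_nonneg_iff_of_pos_left (sub_pos.2 hlt)).1 hnonneg]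

section NormedAddCommGroup

variable {E : Type*} [NormedAddCommGroup E]
variable {t T C L : ℝ} {F G : ℝ → E → E → E} {H : E → E} {X Y : ℝ → E}

structure IsLipschitzCoeffs (t T C : ℝ) (F G : ℝ → E → E → E) (H : E → E) : Prop where
  continuousOn_F : ContinuousOn (fun p : ℝ × E × E => F p.1 p.2.1 p.2.2) (Icc t T ×ˢ univ)
  continuousOn_G : ContinuousOn (fun p : ℝ × E × E => G p.1 p.2.1 p.2.2) (Icc t T ×ˢ univ)
  lipschitz_F : ∀ s ∈ Icc t T, ∀ u₁ u₂ v₁ v₂ : E,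
    ‖F s u₁ v₁ - F s u₂ v₂‖ ≤ C * (‖u₁ - u₂‖ + ‖v₁ - v₂‖)
  lipschitz_G : ∀ s ∈ Icc t T, ∀ u₁ u₂ v₁ v₂ : E,
    ‖G s u₁ v₁ - G s u₂ v₂‖ ≤ C * (‖u₁ - u₂‖ + ‖v₁ - v₂‖)
  lipschitz_H : ∀ u₁ u₂ : E, ‖H u₁ - H u₂‖ ≤ C * ‖u₁ - u₂‖

theorem IsLipschitzCoeffs.continuousOn_F_comp (hL : IsLipschitzCoeffs t T C F G H)
    (hX : ContinuousOn X (Icc t T)) (hY : ContinuousOn Y (Icc t T)) :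
    ContinuousOn (fun r => F r (X r) (Y r)) (Icc t T) :=
  hL.continuousOn_F.comp (continuousOn_id.prodMk (hX.prodMk hY)) fun _ hr => ⟨hr, mem_univ _⟩

theorem IsLipschitzCoeffs.continuousOn_G_comp (hL : IsLipschitzCoeffs t T C F G H)
    (hX : ContinuousOn X (Icc t T)) (hY : ContinuousOn Y (Icc t T)) :
    ContinuousOn (fun r => G r (X r) (Y r)) (Icc t T) :=
  hL.continuousOn_G.comp (continuousOn_id.prodMk (hX.prodMk hY)) fun _ hr => ⟨hr, mem_univ _⟩

def freeze (htT : t ≤ T) (F : ℝ → E → E → E) (Z : C(Icc t T, E × E)) (r : ℝ) : E :=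
  F r (IccExtend htT Z r).1 (IccExtend htT Z r).2

theorem continuous_IccExtend_fst (htT : t ≤ T) (Z : C(Icc t T, E × E)) :
    Continuous fun r => (IccExtend htT Z r).1 :=
  (continuous_IccExtend_iff.2 Z.continuous).fst

theorem continuous_IccExtend_snd (htT : t ≤ T) (Z : C(Icc t T, E × E)) :
    Continuous fun r => (IccExtend htT Z r).2 :=
  (continuous_IccExtend_iff.2 Z.continuous).snd

theorem norm_IccExtend_sub_le (htT : t ≤ T) (Z₁ Z₂ : C(Icc t T, E × E)) (r : ℝ) :
    ‖(IccExtend htT Z₁ r).1 - (IccExtend htT Z₂ r).1‖ +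
      ‖(IccExtend htT Z₁ r).2 - (IccExtend htT Z₂ r).2‖ ≤ 2 * dist Z₁ Z₂ := by
  have h : ‖IccExtend htT Z₁ r - IccExtend htT Z₂ r‖ ≤ dist Z₁ Z₂ := by
    rw [← dist_eq_norm]; exact ContinuousMap.dist_apply_le_dist _
  have h₁ := norm_fst_le (IccExtend htT Z₁ r - IccExtend htT Z₂ r)
  have h₂ := norm_snd_le (IccExtend htT Z₁ r - IccExtend htT Z₂ r)
  rw [Prod.fst_sub] at h₁
  rw [Prod.snd_sub] at h₂
  linarith

theorem norm_freeze_sub_le (htT : t ≤ T) (hL : 0 ≤ L)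
    (hF : ∀ s ∈ Icc t T, ∀ u₁ u₂ v₁ v₂ : E, ‖F s u₁ v₁ - F s u₂ v₂‖ ≤ L * (‖u₁ - u₂‖ + ‖v₁ - v₂‖))
    (Z₁ Z₂ : C(Icc t T, E × E)) {r : ℝ} (hr : r ∈ Icc t T) :
    ‖freeze htT F Z₁ r - freeze htT F Z₂ r‖ ≤ 2 * L * dist Z₁ Z₂ :=
  (hF r hr _ _ _ _).trans (by
    nlinarith [mul_le_mul_of_nonneg_left (norm_IccExtend_sub_le htT Z₁ Z₂ r) hL])

theorem IsLipschitzCoeffs.continuousOn_freeze_F (hL : IsLipschitzCoeffs t T L F G H)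
    (htT : t ≤ T) (Z : C(Icc t T, E × E)) : ContinuousOn (freeze htT F Z) (Icc t T) :=
  hL.continuousOn_F_comp (continuous_IccExtend_fst htT Z).continuousOn
    (continuous_IccExtend_snd htT Z).continuousOn

theorem IsLipschitzCoeffs.continuousOn_freeze_G (hL : IsLipschitzCoeffs t T L F G H)
    (htT : t ≤ T) (Z : C(Icc t T, E × E)) : ContinuousOn (freeze htT G Z) (Icc t T) :=
  hL.continuousOn_G_comp (continuous_IccExtend_fst htT Z).continuousOn
    (continuous_IccExtend_snd htT Z).continuousOn

end NormedAddCommGroup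

section NormedSpace

variable {E : Type*} [NormedAddCommGroup E] [NormedSpace ℝ E]
variable {t T C : ℝ} {F G : ℝ → E → E → E} {H : E → E} {x : E} {X Y : ℝ → E}

theorem norm_integral_subinterval_le {u : ℝ → E} {g : ℝ → ℝ} {a b C D s₁ s₂ : ℝ}
    (hu : ContinuousOn u (Icc a b)) (hg : ContinuousOn g (Icc a b))
    (hug : ∀ r ∈ Icc a b, ‖u r‖ ≤ C * g r + D) (hs₁ : a ≤ s₁) (hs : s₁ ≤ s₂) (hs₂ : s₂ ≤ b) :
    ‖∫ r in s₁..s₂, u r‖ ≤ C * (∫ r in a..b, g r) + (b - a) * D := by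
  have hab : a ≤ b := (hs₁.trans hs).trans hs₂
  calc ‖∫ r in s₁..s₂, u r‖ ≤ ∫ r in s₁..s₂, ‖u r‖ :=
        intervalIntegral.norm_integral_le_integral_norm hs
    _ ≤ ∫ r in a..b, ‖u r‖ :=
        intervalIntegral.integral_mono_interval hs₁ hs hs₂
          (Eventually.of_forall fun _ => norm_nonneg _) (hu.norm.intervalIntegrable_of_Icc hab)
    _ ≤ ∫ r in a..b, (C * g r + D) :=
        intervalIntegral.integral_mono_on hab (hu.norm.intervalIntegrable_of_Icc hab)
          (((hg.const_smul C).add continuousOn_const).intervalIntegrable_of_Icc hab) hug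
    _ = C * (∫ r in a..b, g r) + (b - a) * D := by
        rw [intervalIntegral.integral_add ((hg.intervalIntegrable_of_Icc hab).const_mul C)
          intervalIntegrable_const, intervalIntegral.integral_const_mul,
          intervalIntegral.integral_const, smul_eq_mul]

theorem norm_smul_add_one_sub_smul_le {p q : E} {α C S : ℝ} (hα : α ∈ Icc (0 : ℝ) 1)
    (hp : ‖p‖ ≤ C * S) (hq : ‖q‖ ≤ S) : ‖α • p + (1 - α) • q‖ ≤ max C 1 * S := by
  have hS : 0 ≤ S := (norm_nonneg q).trans hq
  have h₁ : C * S ≤ max C 1 * S := mul_le_mul_of_nonneg_right (le_max_left _ _) hS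
  have h₂ : S ≤ max C 1 * S := le_mul_of_one_le_left hS (le_max_right _ _)
  refine (norm_add_le _ _).trans ?_
  rw [norm_smul, norm_smul, Real.norm_of_nonneg hα.1, Real.norm_of_nonneg (sub_nonneg.2 hα.2)]
  nlinarith [hα.1, hα.2]

/-- `IsFBSol` in an arbitrary real normed space. -/
def IsSolution (T : ℝ) (F G : ℝ → E → E → E) (H : E → E) (t : ℝ) (x : E) (X Y : ℝ → E) :
    Prop :=
  ContinuousOn X (Icc t T) ∧ ContinuousOn Y (Icc t T) ∧
  (∀ s ∈ Icc t T, X s = x + ∫ r in t..s, F r (X r) (Y r)) ∧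
  (∀ s ∈ Icc t T, Y s = H (X T) + ∫ r in s..T, G r (X r) (Y r))

theorem IsSolution.congr {F' G' : ℝ → E → E → E} {H' : E → E} (h : IsSolution T F G H t x X Y)
    (hF : ∀ r ∈ Icc t T, F r (X r) (Y r) = F' r (X r) (Y r))
    (hG : ∀ r ∈ Icc t T, G r (X r) (Y r) = G' r (X r) (Y r)) (hH : H (X T) = H' (X T)) :
    IsSolution T F' G' H' t x X Y := by
  obtain ⟨hXc, hYc, hX, hY⟩ := h
  refine ⟨hXc, hYc, fun s hs => ?_, fun s hs => ?_⟩
  · rw [hX s hs, intervalIntegral.integral_congr fun r hr =>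
      hF r (uIcc_subset_Icc (left_mem_Icc.2 (hs.1.trans hs.2)) hs hr)]
  · rw [hY s hs, hH, intervalIntegral.integral_congr fun r hr =>
      hG r (uIcc_subset_Icc hs (right_mem_Icc.2 (hs.1.trans hs.2)) hr)]

theorem IsSolution.apply_right (h : IsSolution T F G H t x X Y) (htT : t ≤ T) :
    Y T = H (X T) := by
  simpa using h.2.2.2 T (right_mem_Icc.2 htT)

theorem IsSolution.sub {F₁ G₁ F₂ G₂ : ℝ → E → E → E} {H₁ H₂ : E → E} {X₁ Y₁ X₂ Y₂ : ℝ → E}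
    (h₁ : IsSolution T F₁ G₁ H₁ t x X₁ Y₁) (h₂ : IsSolution T F₂ G₂ H₂ t x X₂ Y₂)
    (hF₁ : ContinuousOn (fun r => F₁ r (X₁ r) (Y₁ r)) (Icc t T))
    (hG₁ : ContinuousOn (fun r => G₁ r (X₁ r) (Y₁ r)) (Icc t T))
    (hF₂ : ContinuousOn (fun r => F₂ r (X₂ r) (Y₂ r)) (Icc t T))
    (hG₂ : ContinuousOn (fun r => G₂ r (X₂ r) (Y₂ r)) (Icc t T)) :
    (∀ s ∈ Icc t T,
      X₁ s - X₂ s = ∫ r in t..s, (F₁ r (X₁ r) (Y₁ r) - F₂ r (X₂ r) (Y₂ r))) ∧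
    (∀ s ∈ Icc t T, Y₁ s - Y₂ s =
      Y₁ T - Y₂ T + ∫ r in s..T, (G₁ r (X₁ r) (Y₁ r) - G₂ r (X₂ r) (Y₂ r))) := by
  have hint : ∀ {w : ℝ → E}, ContinuousOn w (Icc t T) → ∀ {s₁ s₂}, s₁ ∈ Icc t T →
      s₂ ∈ Icc t T → IntervalIntegrable w volume s₁ s₂ :=
    fun hw _ _ h₁ h₂ => (hw.mono (uIcc_subset_Icc h₁ h₂)).intervalIntegrable
  refine ⟨fun s hs => ?_, fun s hs => ?_⟩
  · have ht : t ∈ Icc t T := left_mem_Icc.2 (hs.1.trans hs.2)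
    rw [h₁.2.2.1 s hs, h₂.2.2.1 s hs, intervalIntegral.integral_sub (hint hF₁ ht hs)
      (hint hF₂ ht hs), add_sub_add_left_eq_sub]
  · have hT : T ∈ Icc t T := right_mem_Icc.2 (hs.1.trans hs.2)
    rw [h₁.2.2.2 s hs, h₂.2.2.2 s hs, h₁.apply_right (hs.1.trans hs.2),
      h₂.apply_right (hs.1.trans hs.2), intervalIntegral.integral_sub (hint hG₁ hs hT)
        (hint hG₂ hs hT)]
    abel

theorem IsLipschitzCoeffs.homotopy_step (hL : IsLipschitzCoeffs t T C F G H) {ε : ℝ}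
    (hε : 0 ≤ ε) :
    IsLipschitzCoeffs t T (ε * (C + 1)) (fun r u v => ε • (F r u v + v))
      (fun r u v => ε • (G r u v - u)) (fun u => ε • (H u - u)) where
  continuousOn_F := by have := hL.continuousOn_F; fun_prop
  continuousOn_G := by have := hL.continuousOn_G; fun_prop
  lipschitz_F s hs u₁ u₂ v₁ v₂ := by
    rw [← smul_sub, norm_smul, Real.norm_of_nonneg hε, add_sub_add_comm, mul_assoc]
    refine mul_le_mul_of_nonneg_left ((norm_add_le _ _).trans ?_) hε
    linarith [hL.lipschitz_F s hs u₁ u₂ v₁ v₂, norm_nonneg (u₁ - u₂)]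
  lipschitz_G s hs u₁ u₂ v₁ v₂ := by
    rw [← smul_sub, norm_smul, Real.norm_of_nonneg hε, sub_sub_sub_comm, mul_assoc]
    refine mul_le_mul_of_nonneg_left ((norm_sub_le _ _).trans ?_) hε
    linarith [hL.lipschitz_G s hs u₁ u₂ v₁ v₂, norm_nonneg (v₁ - v₂)]
  lipschitz_H u₁ u₂ := by
    rw [← smul_sub, norm_smul, Real.norm_of_nonneg hε, sub_sub_sub_comm, mul_assoc]
    refine mul_le_mul_of_nonneg_left ((norm_sub_le _ _).trans ?_) hε
    linarith [hL.lipschitz_H u₁ u₂]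

def PerturbedSolvable (T : ℝ) (F G : ℝ → E → E → E) (H : E → E) (t : ℝ) (x : E) : Prop :=
  ∀ φ ψ : ℝ → E, ContinuousOn φ (Icc t T) → ContinuousOn ψ (Icc t T) → ∀ a : E,
    ∃ X Y : ℝ → E, IsSolution T (fun r u v => F r u v + φ r) (fun r u v => G r u v + ψ r)
      (fun u => H u + a) t x X Y

variable [CompleteSpace E]

theorem hasDerivAt_of_eq_add_integral {U u : ℝ → E} {a b τ : ℝ} {c : E}
    (hu : ContinuousOn u (Icc a b)) (hτ : τ ∈ Icc a b)
    (hU : ∀ s ∈ Icc a b, U s = c + ∫ r in τ..s, u r) {s : ℝ} (hs : s ∈ Ioo a b) :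
    HasDerivAt U (u s) s := by
  have hnhds : Icc a b ∈ 𝓝 s := Icc_mem_nhds hs.1 hs.2
  have hprim : HasDerivAt (fun s => c + ∫ r in τ..s, u r) (u s) s :=
    (intervalIntegral.integral_hasDerivAt_right
      ((hu.mono (uIcc_subset_Icc hτ (Ioo_subset_Icc_self hs))).intervalIntegrable)
      ((hu.mono Ioo_subset_Icc_self).stronglyMeasurableAtFilter isOpen_Ioo s hs)
      (hu.continuousAt hnhds)).const_add c
  exact hprim.congr_of_eventuallyEq (eventuallyEq_of_mem hnhds hU)

theorem exists_hasDerivAt_eq_smul_add (μ : ℝ) {w : ℝ → E} (hw : Continuous w) (τ : ℝ) (z₀ : E) :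
    ∃ z : ℝ → E, z τ = z₀ ∧ ∀ s, HasDerivAt z (μ • z s + w s) s := by
  -- variation of constants
  set I : ℝ → E := fun s => Real.exp (-μ * τ) • z₀ + ∫ r in τ..s, Real.exp (-μ * r) • w r
  have hwe : Continuous fun r => Real.exp (-μ * r) • w r := by fun_prop
  have hI : ∀ s, HasDerivAt I (Real.exp (-μ * s) • w s) s := fun s =>
    (intervalIntegral.integral_hasDerivAt_right (hwe.intervalIntegrable _ _)
      hwe.aestronglyMeasurable.stronglyMeasurableAtFilter hwe.continuousAt).const_add _
  refine ⟨fun s => Real.exp (μ * s) • I s, ?_, fun s => ?_⟩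
  · simp [I, smul_smul, ← Real.exp_add]
  · have hexp : HasDerivAt (fun s => Real.exp (μ * s)) (Real.exp (μ * s) * μ) s := by
      simpa using ((hasDerivAt_id s).const_mul μ).exp
    refine (hexp.smul (hI s)).congr_deriv ?_
    rw [smul_smul, ← Real.exp_add, show μ * s + -μ * s = 0 by ring, Real.exp_zero, one_smul,
      mul_comm, mul_smul]
    exact add_comm _ _

theorem isSolution_of_hasDerivAt (hX : ∀ s, HasDerivAt X (F s (X s) (Y s)) s)
    (hY : ∀ s, HasDerivAt Y (-G s (X s) (Y s)) s) (hF : Continuous fun s => F s (X s) (Y s))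
    (hG : Continuous fun s => G s (X s) (Y s)) (hXt : X t = x) (hYT : Y T = H (X T)) :
    IsSolution T F G H t x X Y := by
  refine ⟨(continuous_iff_continuousAt.2 fun s => (hX s).continuousAt).continuousOn,
    (continuous_iff_continuousAt.2 fun s => (hY s).continuousAt).continuousOn,
    fun s _ => ?_, fun s _ => ?_⟩
  · rw [intervalIntegral.integral_eq_sub_of_hasDerivAt (fun r _ => hX r)
      (hF.intervalIntegrable _ _), hXt, add_sub_cancel]
  · rw [← neg_neg (∫ r in s..T, G r (X r) (Y r)), ← intervalIntegral.integral_neg,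
      intervalIntegral.integral_eq_sub_of_hasDerivAt (fun r _ => hY r)
        (hG.neg.intervalIntegrable _ _), hYT]
    abel

theorem exists_isSolution_linear {φ ψ : ℝ → E} (hφ : Continuous φ) (hψ : Continuous ψ) (a : E) :
    ∃ X Y : ℝ → E, IsSolution T (fun r _ v => -v + φ r) (fun r u _ => u + ψ r)
      (fun u => u + a) t x X Y := by
  -- `X + Y` and `X - Y` solve decoupled scalar linear equations
  obtain ⟨V, hVT, hV⟩ := exists_hasDerivAt_eq_smul_add 1 (hφ.add hψ) T (-a)
  obtain ⟨U, hUt, hU⟩ := exists_hasDerivAt_eq_smul_add (-1) (hφ.sub hψ) t ((2 : ℝ) • x - V t)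
  have hUc : Continuous U := continuous_iff_continuousAt.2 fun s => (hU s).continuousAt
  have hVc : Continuous V := continuous_iff_continuousAt.2 fun s => (hV s).continuousAt
  refine ⟨fun s => (2⁻¹ : ℝ) • (U s + V s), fun s => (2⁻¹ : ℝ) • (U s - V s),
    isSolution_of_hasDerivAt (fun s => ((hU s).add (hV s)).const_smul (2⁻¹ : ℝ) |>.congr_deriv ?_)
      (fun s => ((hU s).sub (hV s)).const_smul (2⁻¹ : ℝ) |>.congr_deriv ?_) (by fun_prop)
      (by fun_prop) ?_ ?_⟩
  · simp only [Pi.add_apply, Pi.sub_apply]; module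
  · simp only [Pi.add_apply, Pi.sub_apply]; module
  · rw [hUt]; module
  · rw [hVT]; module

theorem perturbedSolvable_linear (htT : t ≤ T) :
    PerturbedSolvable T (fun _ _ v => -v) (fun _ u _ => u) (fun u => u) t x := by
  intro φ ψ hφ hψ a
  obtain ⟨X, Y, h⟩ := exists_isSolution_linear (T := T) (t := t) (x := x)
    (continuous_IccExtend_iff.2 hφ.domRestrict) (continuous_IccExtend_iff.2 hψ.domRestrict) a
  exact ⟨X, Y, h.congr (fun r hr => by rw [IccExtend_of_mem htT _ hr]; rfl)
    (fun r hr => by rw [IccExtend_of_mem htT _ hr]; rfl) rfl⟩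

end NormedSpace

section InnerProductSpace

variable {E : Type*} [NormedAddCommGroup E] [InnerProductSpace ℝ E]
variable {t T C c L : ℝ} {F G F' G' : ℝ → E → E → E} {H H' : E → E} {x : E}

theorem inner_add_sub_inner_add_le {U V Δu Δv eu ev : E} {c D : ℝ}
    (hmono : ⟪-Δv, U⟫ + ⟪Δu, V⟫ ≤ -c * (‖U‖ ^ 2 + ‖V‖ ^ 2)) (heu : ‖eu‖ ≤ D) (hev : ‖ev‖ ≤ D) :
    ⟪Δu + eu, V⟫ - ⟪U, Δv + ev⟫ ≤ -c * (‖U‖ ^ 2 + ‖V‖ ^ 2) + D * (‖U‖ + ‖V‖) := by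
  have h₁ : ⟪eu, V⟫ ≤ D * ‖V‖ :=
    (real_inner_le_norm _ _).trans (mul_le_mul_of_nonneg_right heu (norm_nonneg _))
  have h₂ : -⟪U, ev⟫ ≤ D * ‖U‖ :=
    (neg_le_abs _).trans ((abs_real_inner_le_norm _ _).trans (by
      rw [mul_comm]; exact mul_le_mul_of_nonneg_right hev (norm_nonneg _)))
  rw [inner_neg_left, real_inner_comm] at hmono
  rw [inner_add_left, inner_add_right]
  linarith

theorem sub_mul_le_inner_add {U Δ e : E} {c D : ℝ} (hmono : c * ‖U‖ ^ 2 ≤ ⟪Δ, U⟫)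
    (he : ‖e‖ ≤ D) : c * ‖U‖ ^ 2 - D * ‖U‖ ≤ ⟪U, Δ + e⟫ := by
  have : -(D * ‖U‖) ≤ ⟪U, e⟫ :=
    neg_le_of_abs_le ((abs_real_inner_le_norm _ _).trans (by
      rw [mul_comm]; exact mul_le_mul_of_nonneg_right he (norm_nonneg _)))
  rw [inner_add_right, real_inner_comm]
  linarith

structure IsMonotoneCoeffs (t T C c : ℝ) (F G : ℝ → E → E → E) (H : E → E) : Prop
    extends IsLipschitzCoeffs t T C F G H where
  monotone : ∀ s ∈ Icc t T, ∀ u₁ u₂ v₁ v₂ : E,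
    ⟪-(G s u₁ v₁ - G s u₂ v₂), u₁ - u₂⟫ + ⟪F s u₁ v₁ - F s u₂ v₂, v₁ - v₂⟫
      ≤ -c * (‖u₁ - u₂‖ ^ 2 + ‖v₁ - v₂‖ ^ 2)
  monotone_H : ∀ u₁ u₂ : E, c * ‖u₁ - u₂‖ ^ 2 ≤ ⟪H u₁ - H u₂, u₁ - u₂⟫

theorem IsMonotoneCoeffs.add_forcing (hM : IsMonotoneCoeffs t T C c F G H) {φ ψ : ℝ → E}
    (hφ : ContinuousOn φ (Icc t T)) (hψ : ContinuousOn ψ (Icc t T)) (a : E) :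
    IsMonotoneCoeffs t T C c (fun r u v => F r u v + φ r) (fun r u v => G r u v + ψ r)
      (fun u => H u + a) where
  continuousOn_F := hM.continuousOn_F.add (hφ.comp continuousOn_fst fun _ hp => hp.1)
  continuousOn_G := hM.continuousOn_G.add (hψ.comp continuousOn_fst fun _ hp => hp.1)
  lipschitz_F s hs u₁ u₂ v₁ v₂ := by
    simpa only [add_sub_add_right_eq_sub] using hM.lipschitz_F s hs u₁ u₂ v₁ v₂
  lipschitz_G s hs u₁ u₂ v₁ v₂ := by
    simpa only [add_sub_add_right_eq_sub] using hM.lipschitz_G s hs u₁ u₂ v₁ v₂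
  lipschitz_H u₁ u₂ := by simpa only [add_sub_add_right_eq_sub] using hM.lipschitz_H u₁ u₂
  monotone s hs u₁ u₂ v₁ v₂ := by
    simpa only [add_sub_add_right_eq_sub] using hM.monotone s hs u₁ u₂ v₁ v₂
  monotone_H u₁ u₂ := by simpa only [add_sub_add_right_eq_sub] using hM.monotone_H u₁ u₂

theorem IsMonotoneCoeffs.homotopy (hM : IsMonotoneCoeffs t T C c F G H) {α : ℝ}
    (hα : α ∈ Icc (0 : ℝ) 1) :
    IsMonotoneCoeffs t T (max C 1) (min c 1) (fun r u v => α • F r u v - (1 - α) • v)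
      (fun r u v => α • G r u v + (1 - α) • u) (fun u => α • H u + (1 - α) • u) where
  continuousOn_F := by have := hM.continuousOn_F; fun_prop
  continuousOn_G := by have := hM.continuousOn_G; fun_prop
  lipschitz_F s hs u₁ u₂ v₁ v₂ := by
    convert norm_smul_add_one_sub_smul_le hα (hM.lipschitz_F s hs u₁ u₂ v₁ v₂)
      (q := -(v₁ - v₂)) (by rw [norm_neg]; exact le_add_of_nonneg_left (norm_nonneg _)) using 2
    module
  lipschitz_G s hs u₁ u₂ v₁ v₂ := by
    convert norm_smul_add_one_sub_smul_le hα (hM.lipschitz_G s hs u₁ u₂ v₁ v₂)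
      (q := u₁ - u₂) (le_add_of_nonneg_right (norm_nonneg _)) using 2
    module
  lipschitz_H u₁ u₂ := by
    convert norm_smul_add_one_sub_smul_le hα (hM.lipschitz_H u₁ u₂) le_rfl using 2
    module
  monotone s hs u₁ u₂ v₁ v₂ := by
    have h := hM.monotone s hs u₁ u₂ v₁ v₂
    have e : ⟪-((α • G s u₁ v₁ + (1 - α) • u₁) - (α • G s u₂ v₂ + (1 - α) • u₂)), u₁ - u₂⟫ +
        ⟪(α • F s u₁ v₁ - (1 - α) • v₁) - (α • F s u₂ v₂ - (1 - α) • v₂), v₁ - v₂⟫ =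
        α * (⟪-(G s u₁ v₁ - G s u₂ v₂), u₁ - u₂⟫ + ⟪F s u₁ v₁ - F s u₂ v₂, v₁ - v₂⟫) -
          (1 - α) * (‖u₁ - u₂‖ ^ 2 + ‖v₁ - v₂‖ ^ 2) := by
      rw [show (α • G s u₁ v₁ + (1 - α) • u₁) - (α • G s u₂ v₂ + (1 - α) • u₂) =
          α • (G s u₁ v₁ - G s u₂ v₂) + (1 - α) • (u₁ - u₂) by module,
        show (α • F s u₁ v₁ - (1 - α) • v₁) - (α • F s u₂ v₂ - (1 - α) • v₂) =
          α • (F s u₁ v₁ - F s u₂ v₂) - (1 - α) • (v₁ - v₂) by module]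
      generalize G s u₁ v₁ - G s u₂ v₂ = dG
      generalize F s u₁ v₁ - F s u₂ v₂ = dF
      generalize u₁ - u₂ = du
      generalize v₁ - v₂ = dv
      simp only [inner_neg_left, inner_add_left, inner_sub_left, real_inner_smul_left,
        real_inner_self_eq_norm_sq]
      ring
    have hQ : 0 ≤ ‖u₁ - u₂‖ ^ 2 + ‖v₁ - v₂‖ ^ 2 := by positivity
    rw [e]
    nlinarith [mul_le_mul_of_nonneg_left h hα.1,
      mul_nonneg (mul_nonneg hα.1 (sub_nonneg.2 (min_le_left c 1))) hQ,
      mul_nonneg (mul_nonneg (sub_nonneg.2 hα.2) (sub_nonneg.2 (min_le_right c 1))) hQ]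
  monotone_H u₁ u₂ := by
    have h := hM.monotone_H u₁ u₂
    rw [show (α • H u₁ + (1 - α) • u₁) - (α • H u₂ + (1 - α) • u₂) =
        α • (H u₁ - H u₂) + (1 - α) • (u₁ - u₂) by module, inner_add_left,
      real_inner_smul_left, real_inner_smul_left, real_inner_self_eq_norm_sq]
    have hQ : 0 ≤ ‖u₁ - u₂‖ ^ 2 := sq_nonneg _
    nlinarith [mul_le_mul_of_nonneg_left h hα.1,
      mul_nonneg (mul_nonneg hα.1 (sub_nonneg.2 (min_le_left c 1))) hQ,
      mul_nonneg (mul_nonneg (sub_nonneg.2 hα.2) (sub_nonneg.2 (min_le_right c 1))) hQ]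

variable [CompleteSpace E]

theorem inner_sub_inner_eq_integral {U V u v : ℝ → E} {a b : ℝ} (hab : a ≤ b)
    (hUc : ContinuousOn U (Icc a b)) (hVc : ContinuousOn V (Icc a b))
    (hu : ContinuousOn u (Icc a b)) (hv : ContinuousOn v (Icc a b))
    (hU : ∀ s ∈ Icc a b, U s = U a + ∫ r in a..s, u r)
    (hV : ∀ s ∈ Icc a b, V s = V b + ∫ r in s..b, v r) :
    ⟪U b, V b⟫ - ⟪U a, V a⟫ = ∫ r in a..b, (⟪u r, V r⟫ - ⟪U r, v r⟫) := by
  have ha : a ∈ Icc a b := left_mem_Icc.2 hab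
  have hb : b ∈ Icc a b := right_mem_Icc.2 hab
  have hV' : ∀ s ∈ Icc a b, V s = V b + ∫ r in b..s, -v r := fun s hs => by
    rw [hV s hs, intervalIntegral.integral_neg, intervalIntegral.integral_symm]
  have hint : ContinuousOn (fun r => ⟪u r, V r⟫ - ⟪U r, v r⟫) (Icc a b) :=
    (hu.inner hVc).sub (hUc.inner hv)
  refine (intervalIntegral.integral_eq_sub_of_hasDeriv_right_of_le hab (hUc.inner hVc)
    (fun s hs => ?_) (hint.intervalIntegrable_of_Icc hab)).symm
  have hderiv := (hasDerivAt_of_eq_add_integral hu ha hU hs).inner ℝ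
    (hasDerivAt_of_eq_add_integral hv.neg hb hV' hs)
  rw [Pi.neg_apply, inner_neg_right, add_comm, ← sub_eq_add_neg] at hderiv
  exact hderiv.hasDerivWithinAt

theorem norm_add_integral_le_of_energy {U V u v : ℝ → E} {a b c D : ℝ} (hab : a ≤ b)
    (hc : 0 < c) (hD : 0 ≤ D)
    (hUc : ContinuousOn U (Icc a b)) (hVc : ContinuousOn V (Icc a b))
    (hu : ContinuousOn u (Icc a b)) (hv : ContinuousOn v (Icc a b))
    (hU : ∀ s ∈ Icc a b, U s = ∫ r in a..s, u r)
    (hV : ∀ s ∈ Icc a b, V s = V b + ∫ r in s..b, v r)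
    (hmono : ∀ r ∈ Icc a b, ⟪u r, V r⟫ - ⟪U r, v r⟫
      ≤ -c * (‖U r‖ ^ 2 + ‖V r‖ ^ 2) + D * (‖U r‖ + ‖V r‖))
    (hmono_end : c * ‖U b‖ ^ 2 - D * ‖U b‖ ≤ ⟪U b, V b⟫) :
    ‖U b‖ + ∫ r in a..b, (‖U r‖ + ‖V r‖) ≤ 2 * (1 + 2 * (b - a)) / c * D := by
  set ℓ := b - a
  set I := ∫ r in a..b, (‖U r‖ ^ 2 + ‖V r‖ ^ 2)
  set S := ∫ r in a..b, (‖U r‖ + ‖V r‖)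
  set W := ‖U b‖ + S
  have hℓ : 0 ≤ ℓ := sub_nonneg.2 hab
  have hsum : ContinuousOn (fun r => ‖U r‖ + ‖V r‖) (Icc a b) := hUc.norm.add hVc.norm
  have hsq : ContinuousOn (fun r => ‖U r‖ ^ 2 + ‖V r‖ ^ 2) (Icc a b) :=
    (hUc.norm.pow 2).add (hVc.norm.pow 2)
  have hI : 0 ≤ I := intervalIntegral.integral_nonneg hab fun r _ => by positivity
  have hS : 0 ≤ S := intervalIntegral.integral_nonneg hab fun r _ => by positivity
  have hUa : U a = 0 := by simpa using hU a (left_mem_Icc.2 hab)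
  have henergy : ⟪U b, V b⟫ ≤ -c * I + D * S := by
    have hid := inner_sub_inner_eq_integral hab hUc hVc hu hv
      (fun s hs => by rw [hUa, zero_add]; exact hU s hs) hV
    rw [hUa, inner_zero_left, sub_zero] at hid
    rw [hid, ← intervalIntegral.integral_const_mul, ← intervalIntegral.integral_const_mul,
      ← intervalIntegral.integral_add]
    · exact intervalIntegral.integral_mono_on hab
        (((hu.inner hVc).sub (hUc.inner hv)).intervalIntegrable_of_Icc hab)
        (((continuousOn_const.mul hsq).add
          (continuousOn_const.mul hsum)).intervalIntegrable_of_Icc hab) hmono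
    · exact (continuousOn_const.mul hsq).intervalIntegrable_of_Icc hab
    · exact (continuousOn_const.mul hsum).intervalIntegrable_of_Icc hab
  have hCS : S ^ 2 ≤ 2 * ℓ * I := by
    calc S ^ 2 ≤ ℓ * ∫ r in a..b, (‖U r‖ + ‖V r‖) ^ 2 := sq_integral_le_mul_integral_sq hab hsum
      _ ≤ ℓ * ∫ r in a..b, 2 * (‖U r‖ ^ 2 + ‖V r‖ ^ 2) := by
          gcongr
          exact intervalIntegral.integral_mono_on hab ((hsum.pow 2).intervalIntegrable_of_Icc hab)
            ((continuousOn_const.mul hsq).intervalIntegrable_of_Icc hab)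
            fun r _ => by nlinarith [sq_nonneg (‖U r‖ - ‖V r‖)]
      _ = 2 * ℓ * I := by rw [intervalIntegral.integral_const_mul]; ring
  -- `c W² ≤ 2 c (‖U b‖² + S²) ≤ 2 (1 + 2ℓ) c (‖U b‖² + I) ≤ 2 (1 + 2ℓ) D W`
  have hW : c * W ^ 2 ≤ 2 * (1 + 2 * ℓ) * D * W := by
    nlinarith [sq_nonneg (‖U b‖ - S), mul_nonneg hℓ hI, mul_nonneg hℓ (sq_nonneg ‖U b‖),
      mul_nonneg hc.le (mul_nonneg hℓ (sq_nonneg ‖U b‖))]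
  rcases (show 0 ≤ W from add_nonneg (norm_nonneg _) hS).eq_or_lt with hW0 | hW0
  · rw [← hW0]; positivity
  · rw [div_mul_eq_mul_div, le_div_iff₀ hc]
    nlinarith

/-- `C` times the bound of `norm_add_integral_le_of_energy`, plus the direct and the
integrated contribution of the forcing. -/
def stabilityConst (C c ℓ : ℝ) : ℝ := C * (2 * (1 + 2 * ℓ) / c) + 1 + ℓ

theorem one_le_stabilityConst {C c ℓ : ℝ} (hC : 0 ≤ C) (hc : 0 < c) (hℓ : 0 ≤ ℓ) :
    1 ≤ stabilityConst C c ℓ := by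
  have : 0 ≤ C * (2 * (1 + 2 * ℓ) / c) := by positivity
  unfold stabilityConst; linarith

theorem norm_le_of_energy {U V u v : ℝ → E} {a b C c D : ℝ} (hab : a ≤ b)
    (hC : 0 ≤ C) (hc : 0 < c) (hD : 0 ≤ D)
    (hUc : ContinuousOn U (Icc a b)) (hVc : ContinuousOn V (Icc a b))
    (hu : ContinuousOn u (Icc a b)) (hv : ContinuousOn v (Icc a b))
    (hU : ∀ s ∈ Icc a b, U s = ∫ r in a..s, u r)
    (hV : ∀ s ∈ Icc a b, V s = V b + ∫ r in s..b, v r)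
    (hmono : ∀ r ∈ Icc a b, ⟪u r, V r⟫ - ⟪U r, v r⟫
      ≤ -c * (‖U r‖ ^ 2 + ‖V r‖ ^ 2) + D * (‖U r‖ + ‖V r‖))
    (hmono_end : c * ‖U b‖ ^ 2 - D * ‖U b‖ ≤ ⟪U b, V b⟫)
    (hu_le : ∀ r ∈ Icc a b, ‖u r‖ ≤ C * (‖U r‖ + ‖V r‖) + D)
    (hv_le : ∀ r ∈ Icc a b, ‖v r‖ ≤ C * (‖U r‖ + ‖V r‖) + D)
    (hV_end : ‖V b‖ ≤ C * ‖U b‖ + D) :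
    ∀ s ∈ Icc a b, ‖U s‖ ≤ stabilityConst C c (b - a) * D ∧
      ‖V s‖ ≤ stabilityConst C c (b - a) * D := by
  have hW := norm_add_integral_le_of_energy hab hc hD hUc hVc hu hv hU hV hmono hmono_end
  have hsum : ContinuousOn (fun r => ‖U r‖ + ‖V r‖) (Icc a b) := hUc.norm.add hVc.norm
  have hCW := mul_le_mul_of_nonneg_left hW hC
  have hUb := norm_nonneg (U b)
  have hℓ : 0 ≤ (b - a) * D := mul_nonneg (sub_nonneg.2 hab) hD
  intro s hs
  have hu_int := norm_integral_subinterval_le hu hsum hu_le le_rfl hs.1 hs.2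
  have hv_int := norm_integral_subinterval_le hv hsum hv_le hs.1 hs.2 le_rfl
  constructor
  · calc ‖U s‖ = ‖∫ r in a..s, u r‖ := by rw [hU s hs]
      _ ≤ stabilityConst C c (b - a) * D := by unfold stabilityConst; nlinarith
  · calc ‖V s‖ ≤ ‖V b‖ + ‖∫ r in s..b, v r‖ := by rw [hV s hs]; exact norm_add_le _ _
      _ ≤ stabilityConst C c (b - a) * D := by unfold stabilityConst; nlinarith

theorem IsMonotoneCoeffs.norm_sub_le {F₁ G₁ F₂ G₂ : ℝ → E → E → E} {H₁ H₂ : E → E}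
    {X₁ Y₁ X₂ Y₂ : ℝ → E} {D : ℝ} (hM : IsMonotoneCoeffs t T C c F₁ G₁ H₁) (hC : 0 ≤ C)
    (hc : 0 < c) (hD : 0 ≤ D)
    (h₁ : IsSolution T F₁ G₁ H₁ t x X₁ Y₁) (h₂ : IsSolution T F₂ G₂ H₂ t x X₂ Y₂)
    (hF₂ : ContinuousOn (fun r => F₂ r (X₂ r) (Y₂ r)) (Icc t T))
    (hG₂ : ContinuousOn (fun r => G₂ r (X₂ r) (Y₂ r)) (Icc t T))
    (hF : ∀ r ∈ Icc t T, ‖F₁ r (X₂ r) (Y₂ r) - F₂ r (X₂ r) (Y₂ r)‖ ≤ D)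
    (hG : ∀ r ∈ Icc t T, ‖G₁ r (X₂ r) (Y₂ r) - G₂ r (X₂ r) (Y₂ r)‖ ≤ D)
    (hH : ‖H₁ (X₂ T) - H₂ (X₂ T)‖ ≤ D) :
    ∀ s ∈ Icc t T, ‖X₁ s - X₂ s‖ ≤ stabilityConst C c (T - t) * D ∧
      ‖Y₁ s - Y₂ s‖ ≤ stabilityConst C c (T - t) * D := by
  intro s hs
  have htT : t ≤ T := hs.1.trans hs.2
  have hF₁ := hM.continuousOn_F_comp h₁.1 h₁.2.1
  have hG₁ := hM.continuousOn_G_comp h₁.1 h₁.2.1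
  obtain ⟨hU, hV⟩ := h₁.sub h₂ hF₁ hG₁ hF₂ hG₂
  have hV_end : Y₁ T - Y₂ T = H₁ (X₁ T) - H₂ (X₂ T) := by
    rw [h₁.apply_right htT, h₂.apply_right htT]
  refine norm_le_of_energy (U := fun s => X₁ s - X₂ s) (V := fun s => Y₁ s - Y₂ s)
    (u := fun r => F₁ r (X₁ r) (Y₁ r) - F₂ r (X₂ r) (Y₂ r))
    (v := fun r => G₁ r (X₁ r) (Y₁ r) - G₂ r (X₂ r) (Y₂ r)) htT hC hc hD (h₁.1.sub h₂.1)
    (h₁.2.1.sub h₂.2.1) (hF₁.sub hF₂) (hG₁.sub hG₂) hU hV (fun r hr => ?_) ?_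
    (fun r hr => ?_) (fun r hr => ?_) ?_ s hs
  · simpa only [sub_add_sub_cancel] using inner_add_sub_inner_add_le
      (hM.monotone r hr (X₁ r) (X₂ r) (Y₁ r) (Y₂ r)) (hF r hr) (hG r hr)
  · simpa only [hV_end, sub_add_sub_cancel] using
      sub_mul_le_inner_add (hM.monotone_H (X₁ T) (X₂ T)) hH
  · exact (norm_sub_le_norm_sub_add_norm_sub _ (F₁ r (X₂ r) (Y₂ r)) _).trans
      (add_le_add (hM.lipschitz_F r hr _ _ _ _) (hF r hr))
  · exact (norm_sub_le_norm_sub_add_norm_sub _ (G₁ r (X₂ r) (Y₂ r)) _).trans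
      (add_le_add (hM.lipschitz_G r hr _ _ _ _) (hG r hr))
  · exact hV_end ▸ (norm_sub_le_norm_sub_add_norm_sub _ (H₁ (X₂ T)) _).trans
      (add_le_add (hM.lipschitz_H _ _) hH)

theorem IsMonotoneCoeffs.eqOn_of_isSolution {X₁ Y₁ X₂ Y₂ : ℝ → E}
    (hM : IsMonotoneCoeffs t T C c F G H) (hC : 0 ≤ C) (hc : 0 < c)
    (h₁ : IsSolution T F G H t x X₁ Y₁) (h₂ : IsSolution T F G H t x X₂ Y₂) :
    EqOn X₁ X₂ (Icc t T) ∧ EqOn Y₁ Y₂ (Icc t T) := by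
  have h := hM.norm_sub_le hC hc le_rfl h₁ h₂ (hM.continuousOn_F_comp h₂.1 h₂.2.1)
    (hM.continuousOn_G_comp h₂.1 h₂.2.1) (by simp) (by simp) (by simp)
  simp only [mul_zero, norm_le_zero_iff, sub_eq_zero] at h
  exact ⟨fun s hs => (h s hs).1, fun s hs => (h s hs).2⟩

theorem IsMonotoneCoeffs.norm_sub_le_of_freeze (hM : IsMonotoneCoeffs t T C c F G H)
    (hC : 0 ≤ C) (hc : 0 < c) (hL : IsLipschitzCoeffs t T L F' G' H') (hL0 : 0 ≤ L)
    (htT : t ≤ T) {Z₁ Z₂ : C(Icc t T, E × E)} {X₁ Y₁ X₂ Y₂ : ℝ → E}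
    (h₁ : IsSolution T (fun r u v => F r u v + freeze htT F' Z₁ r)
      (fun r u v => G r u v + freeze htT G' Z₁ r) (fun u => H u + H' (IccExtend htT Z₁ T).1)
      t x X₁ Y₁)
    (h₂ : IsSolution T (fun r u v => F r u v + freeze htT F' Z₂ r)
      (fun r u v => G r u v + freeze htT G' Z₂ r) (fun u => H u + H' (IccExtend htT Z₂ T).1)
      t x X₂ Y₂) :
    ∀ s ∈ Icc t T, ‖X₁ s - X₂ s‖ ≤ stabilityConst C c (T - t) * (2 * L * dist Z₁ Z₂) ∧
      ‖Y₁ s - Y₂ s‖ ≤ stabilityConst C c (T - t) * (2 * L * dist Z₁ Z₂) := by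
  have hM₂ := hM.add_forcing (hL.continuousOn_freeze_F htT Z₂) (hL.continuousOn_freeze_G htT Z₂)
    (H' (IccExtend htT Z₂ T).1)
  refine (hM.add_forcing (hL.continuousOn_freeze_F htT Z₁) (hL.continuousOn_freeze_G htT Z₁)
    _).norm_sub_le hC hc (by positivity) h₁ h₂ (hM₂.continuousOn_F_comp h₂.1 h₂.2.1)
    (hM₂.continuousOn_G_comp h₂.1 h₂.2.1) (fun r hr => ?_) (fun r hr => ?_) ?_
  · rw [add_sub_add_left_eq_sub]
    exact norm_freeze_sub_le htT hL0 hL.lipschitz_F Z₁ Z₂ hr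
  · rw [add_sub_add_left_eq_sub]
    exact norm_freeze_sub_le htT hL0 hL.lipschitz_G Z₁ Z₂ hr
  · rw [add_sub_add_left_eq_sub]
    refine (hL.lipschitz_H _ _).trans ?_
    nlinarith [mul_le_mul_of_nonneg_left (norm_IccExtend_sub_le htT Z₁ Z₂ T) hL0,
      norm_nonneg ((IccExtend htT Z₁ T).2 - (IccExtend htT Z₂ T).2)]

theorem IsMonotoneCoeffs.exists_isSolution_add (hM : IsMonotoneCoeffs t T C c F G H)
    (hC : 0 ≤ C) (hc : 0 < c) (htT : t ≤ T) (hsolv : PerturbedSolvable T F G H t x)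
    (hL : IsLipschitzCoeffs t T L F' G' H') (hL0 : 0 ≤ L)
    (hsmall : 4 * stabilityConst C c (T - t) * L ≤ 1) :
    ∃ X Y : ℝ → E, IsSolution T (fun r u v => F r u v + F' r u v)
      (fun r u v => G r u v + G' r u v) (fun u => H u + H' u) t x X Y := by
  -- `Θ Z` solves the system with the perturbation frozen along `Z`; its fixed point solves the
  -- perturbed system
  choose X Y hXY using fun Z : C(Icc t T, E × E) => hsolv (freeze htT F' Z) (freeze htT G' Z)
    (hL.continuousOn_freeze_F htT Z) (hL.continuousOn_freeze_G htT Z) (H' (IccExtend htT Z T).1)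
  let Θ : C(Icc t T, E × E) → C(Icc t T, E × E) := fun Z =>
    ⟨fun p => (X Z p, Y Z p), (hXY Z).1.domRestrict.prodMk (hXY Z).2.1.domRestrict⟩
  have hΘ : ContractingWith 2⁻¹ Θ := by
    refine ⟨by norm_num, LipschitzWith.of_dist_le_mul fun Z₁ Z₂ => ?_⟩
    have hK := one_le_stabilityConst hC hc (sub_nonneg.2 htT)
    have hsmall' : stabilityConst C c (T - t) * (2 * L * dist Z₁ Z₂) ≤ 2⁻¹ * dist Z₁ Z₂ := by
      nlinarith [dist_nonneg (x := Z₁) (y := Z₂)]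
    have h := hM.norm_sub_le_of_freeze hC hc hL hL0 htT (hXY Z₁) (hXY Z₂)
    rw [NNReal.coe_inv, NNReal.coe_ofNat, ContinuousMap.dist_le (by positivity)]
    intro p
    rw [Prod.dist_eq, dist_eq_norm, dist_eq_norm]
    exact max_le ((h p p.2).1.trans hsmall') ((h p p.2).2.trans hsmall')
  set Z := ContractingWith.fixedPoint Θ hΘ
  have hZ : ∀ r ∈ Icc t T, IccExtend htT Z r = (X Z r, Y Z r) := fun r hr => by
    rw [IccExtend_of_mem htT _ hr]
    exact (DFunLike.congr_fun hΘ.fixedPoint_isFixedPt ⟨r, hr⟩).symm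
  exact ⟨X Z, Y Z, (hXY Z).congr (fun r hr => by simp only [freeze, hZ r hr])
    (fun r hr => by simp only [freeze, hZ r hr]) (by rw [hZ T (right_mem_Icc.2 htT)])⟩

theorem IsMonotoneCoeffs.perturbedSolvable_add (hM : IsMonotoneCoeffs t T C c F G H)
    (hC : 0 ≤ C) (hc : 0 < c) (htT : t ≤ T) (hsolv : PerturbedSolvable T F G H t x)
    (hL : IsLipschitzCoeffs t T L F' G' H') (hL0 : 0 ≤ L)
    (hsmall : 4 * stabilityConst C c (T - t) * L ≤ 1) :
    PerturbedSolvable T (fun r u v => F r u v + F' r u v) (fun r u v => G r u v + G' r u v)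
      (fun u => H u + H' u) t x := by
  intro φ ψ hφ hψ a
  have hsolv' : PerturbedSolvable T (fun r u v => F r u v + φ r) (fun r u v => G r u v + ψ r)
      (fun u => H u + a) t x := fun φ' ψ' hφ' hψ' a' => by
    simpa only [add_assoc] using
      hsolv (fun r => φ r + φ' r) (fun r => ψ r + ψ' r) (hφ.add hφ') (hψ.add hψ') (a + a')
  obtain ⟨X, Y, h⟩ := (hM.add_forcing hφ hψ a).exists_isSolution_add hC hc htT hsolv' hL hL0
    hsmall
  exact ⟨X, Y, by simpa only [add_right_comm] using h⟩

theorem one_of_zero_of_step {p : ℝ → Prop} {δ : ℝ} (hδ : 0 < δ) (h₀ : p 0)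
    (hstep : ∀ α ε, 0 ≤ α → 0 ≤ ε → ε ≤ δ → α + ε ≤ 1 → p α → p (α + ε)) : p 1 := by
  have hk : ∀ k : ℕ, p (min (k * δ) 1) := by
    intro k
    induction k with
    | zero => simpa using h₀
    | succ k ih =>
      have hmono : min (k * δ) 1 ≤ min ((k + 1 : ℕ) * δ) 1 :=
        min_le_min_right _ (by push_cast; linarith)
      have hle : min ((k + 1 : ℕ) * δ) 1 ≤ min (k * δ) 1 + δ := by
        push_cast; rw [← min_add_add_right]; exact min_le_min (by linarith) (by linarith)
      simpa using hstep _ _ (by positivity) (sub_nonneg.2 hmono) (by linarith)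
        (by simp) ih
  obtain ⟨k, hk'⟩ := exists_nat_ge δ⁻¹
  have h₁ : 1 ≤ (k : ℝ) * δ := by
    simpa [inv_mul_cancel₀ hδ.ne'] using mul_le_mul_of_nonneg_right hk' hδ.le
  simpa [min_eq_right h₁] using hk k

theorem IsMonotoneCoeffs.perturbedSolvable (hM : IsMonotoneCoeffs t T C c F G H) (hC : 0 ≤ C)
    (hc : 0 < c) (htT : t ≤ T) : PerturbedSolvable T F G H t x := by
  -- the step size is uniform in `α` because the constants of `IsMonotoneCoeffs.homotopy` are
  set K := stabilityConst (max C 1) (min c 1) (T - t)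
  have hK : 1 ≤ K :=
    one_le_stabilityConst (zero_le_one.trans (le_max_right _ _)) (lt_min hc one_pos)
      (sub_nonneg.2 htT)
  have h := one_of_zero_of_step (δ := (4 * K * (C + 1))⁻¹) (by positivity)
    (p := fun α => PerturbedSolvable T (fun r u v => α • F r u v - (1 - α) • v)
      (fun r u v => α • G r u v + (1 - α) • u) (fun u => α • H u + (1 - α) • u) t x)
    (by simpa using perturbedSolvable_linear htT) fun α ε hα hε hεδ hαε hα' => by
      have hsmall : 4 * K * (ε * (C + 1)) ≤ 1 :=
        calc 4 * K * (ε * (C + 1)) = ε * (4 * K * (C + 1)) := by ring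
          _ ≤ (4 * K * (C + 1))⁻¹ * (4 * K * (C + 1)) := by gcongr
          _ = 1 := inv_mul_cancel₀ (by positivity)
      have h := (hM.homotopy ⟨hα, by linarith⟩).perturbedSolvable_add
        (zero_le_one.trans (le_max_right _ _)) (lt_min hc one_pos) htT hα'
        (hM.homotopy_step hε) (by positivity) (by linarith)
      convert h using 1 <;> funext <;> module
  simpa using h

end InnerProductSpace

end ForwardBackward

theorem fbsde_deterministic_exists_unique_general
    (n : ℕ) (T : ℝ)
    (f g : ℝ → Vec n → Vec n → Vec n) (h : Vec n → Vec n)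
    (hf_cont : ContinuousOn (fun p : ℝ × Vec n × Vec n => f p.1 p.2.1 p.2.2)
      (Icc 0 T ×ˢ (univ ×ˢ univ)))
    (hg_cont : ContinuousOn (fun p : ℝ × Vec n × Vec n => g p.1 p.2.1 p.2.2)
      (Icc 0 T ×ˢ (univ ×ˢ univ)))
    (C₁ : ℝ) (hC₁ : 0 < C₁)
    (hf_lip : ∀ t ∈ Icc (0:ℝ) T, ∀ x₁ x₂ y₁ y₂ : Vec n,
      ‖f t x₁ y₁ - f t x₂ y₂‖ ≤ C₁ * (‖x₁ - x₂‖ + ‖y₁ - y₂‖))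
    (hg_lip : ∀ t ∈ Icc (0:ℝ) T, ∀ x₁ x₂ y₁ y₂ : Vec n,
      ‖g t x₁ y₁ - g t x₂ y₂‖ ≤ C₁ * (‖x₁ - x₂‖ + ‖y₁ - y₂‖))
    (hh_lip : ∀ x₁ x₂ : Vec n, ‖h x₁ - h x₂‖ ≤ C₁ * ‖x₁ - x₂‖)
    (C₂ : ℝ) (hC₂ : 0 < C₂)
    (hmono : ∀ t ∈ Icc (0:ℝ) T, ∀ x₁ x₂ y₁ y₂ : Vec n,
      ⟪-(g t x₁ y₁ - g t x₂ y₂), x₁ - x₂⟫ + ⟪f t x₁ y₁ - f t x₂ y₂, y₁ - y₂⟫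
        ≤ -C₂ * (‖x₁ - x₂‖ ^ 2 + ‖y₁ - y₂‖ ^ 2))
    (hh_mono : ∀ x₁ x₂ : Vec n, C₂ * ‖x₁ - x₂‖ ^ 2 ≤ ⟪h x₁ - h x₂, x₁ - x₂⟫) :
    ∀ t ∈ Icc (0:ℝ) T, ∀ x : Vec n,
      (∃ X Y : ℝ → Vec n, IsFBSol T f g h t x X Y) ∧
      (∀ X₁ Y₁ X₂ Y₂ : ℝ → Vec n, IsFBSol T f g h t x X₁ Y₁ → IsFBSol T f g h t x X₂ Y₂ →
        EqOn X₁ X₂ (Icc t T) ∧ EqOn Y₁ Y₂ (Icc t T)) := by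
  intro t ht x
  have hsub : Icc t T ⊆ Icc 0 T := Icc_subset_Icc_left ht.1
  have hM : ForwardBackward.IsMonotoneCoeffs t T C₁ C₂ f g h :=
    { continuousOn_F := hf_cont.mono (prod_mono hsub (univ_prod_univ ▸ subset_rfl))
      continuousOn_G := hg_cont.mono (prod_mono hsub (univ_prod_univ ▸ subset_rfl))
      lipschitz_F := fun s hs => hf_lip s (hsub hs)
      lipschitz_G := fun s hs => hg_lip s (hsub hs)
      lipschitz_H := hh_lip
      monotone := fun s hs => hmono s (hsub hs)
      monotone_H := hh_mono }
  obtain ⟨X, Y, hXY⟩ := hM.perturbedSolvable hC₁.le hC₂ ht.2 (x := x) (fun _ => 0) (fun _ => 0)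
    continuousOn_const continuousOn_const 0
  simp only [add_zero] at hXY
  exact ⟨⟨X, Y, hXY⟩,
    fun X₁ Y₁ X₂ Y₂ h₁ h₂ => hM.eqOn_of_isSolution hC₁.le hC₂ h₁ h₂⟩

/-- Deterministic forward–backward existence and uniqueness (Lemma 5 of the paper):
under the Lipschitz and monotonicity assumptions, for every `t ∈ [0,T]` and every `x ∈ ℝⁿ`
there is exactly one solution (as a pair of continuous maps on `[t,T]`) of the
forward–backward system with data `(t, x)`. -/
theorem fbsde_deterministic_exists_unique
    (n : ℕ) (hn : 1 ≤ n) (T : ℝ) (hT : 0 < T)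
    (f g : ℝ → Vec n → Vec n → Vec n) (h : Vec n → Vec n)
    (hf_cont : ContinuousOn (fun p : ℝ × Vec n × Vec n => f p.1 p.2.1 p.2.2)
      (Icc 0 T ×ˢ (univ ×ˢ univ)))
    (hg_cont : ContinuousOn (fun p : ℝ × Vec n × Vec n => g p.1 p.2.1 p.2.2)
      (Icc 0 T ×ˢ (univ ×ˢ univ)))
    (hh_cont : Continuous h)
    (C₁ : ℝ) (hC₁ : 0 < C₁)
    (hf_lip : ∀ t ∈ Icc (0:ℝ) T, ∀ x₁ x₂ y₁ y₂ : Vec n,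
      ‖f t x₁ y₁ - f t x₂ y₂‖ ≤ C₁ * (‖x₁ - x₂‖ + ‖y₁ - y₂‖))
    (hg_lip : ∀ t ∈ Icc (0:ℝ) T, ∀ x₁ x₂ y₁ y₂ : Vec n,
      ‖g t x₁ y₁ - g t x₂ y₂‖ ≤ C₁ * (‖x₁ - x₂‖ + ‖y₁ - y₂‖))
    (hh_lip : ∀ x₁ x₂ : Vec n, ‖h x₁ - h x₂‖ ≤ C₁ * ‖x₁ - x₂‖)
    (C₂ : ℝ) (hC₂ : 0 < C₂)
    (hmono : ∀ t ∈ Icc (0:ℝ) T, ∀ x₁ x₂ y₁ y₂ : Vec n,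
      ⟪-(g t x₁ y₁ - g t x₂ y₂), x₁ - x₂⟫ + ⟪f t x₁ y₁ - f t x₂ y₂, y₁ - y₂⟫
        ≤ -C₂ * (‖x₁ - x₂‖ ^ 2 + ‖y₁ - y₂‖ ^ 2))
    (hh_mono : ∀ x₁ x₂ : Vec n, C₂ * ‖x₁ - x₂‖ ^ 2 ≤ ⟪h x₁ - h x₂, x₁ - x₂⟫) :
    ∀ t ∈ Icc (0:ℝ) T, ∀ x : Vec n,
      (∃ X Y : ℝ → Vec n, IsFBSol T f g h t x X Y) ∧
      (∀ X₁ Y₁ X₂ Y₂ : ℝ → Vec n, IsFBSol T f g h t x X₁ Y₁ → IsFBSol T f g h t x X₂ Y₂ →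
        EqOn X₁ X₂ (Icc t T) ∧ EqOn Y₁ Y₂ (Icc t T)) :=
  fbsde_deterministic_exists_unique_general n T f g h hf_cont hg_cont C₁ hC₁ hf_lip hg_lip hh_lip C₂
    hC₂ hmono hh_mono
end
end

section
/- There exists a constant C > 0, depending only on C₁, C₂ and T (in particular independent of t), such that for all t ∈ [0,T] and all x,y ∈ ℝⁿ, sup_{s∈[t,T]} |X^{t,x}(s) − X^{t,y}(s)|² ≤ C|x−y|² and sup_{s∈[t,T]} |Y^{t,x}(s) − Y^{t,y}(s)|² ≤ C|x−y|². (Deterministic version of the Lipschitz-in-x estimate, Lemma 1 of the paper in the limit ε → 0.) -/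
open MeasureTheory Set intervalIntegral RealInnerProductSpace

noncomputable section

/-! For two solutions with data `(t, x)` and `(t, y)`, write `δX, δY` for their differences. The
monotonicity condition makes `⟪δX, δY⟫ + C₂ ∫ₜ (‖δX‖² + ‖δY‖²)` nonincreasing on `[t, T]`; comparing
its endpoint values with the monotonicity of `h` gives
`C₂ (‖δX T‖² + ∫ (‖δX‖² + ‖δY‖²)) ≤ ‖x - y‖ ‖δY t‖`, while the Lipschitz bounds give
`‖δY t‖ ≤ C₁ (‖δX T‖ + ∫ (‖δX‖ + ‖δY‖))`. Young's inequality at the scale `C₁ ‖x - y‖ / C₂` closes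
this into a linear bound on `‖δX T‖ + ∫ (‖δX‖ + ‖δY‖)` by `‖x - y‖`, and the integral equations then
bound `δX` and `δY` pointwise. -/

theorem le_div_two_add_sq_div {p m : ℝ} (hm : 0 < m) : p ≤ m / 2 + p ^ 2 / (2 * m) := by
  rw [div_add_div _ _ two_ne_zero (by positivity), le_div_iff₀ (by positivity)]
  nlinarith [sq_nonneg (p - m)]

theorem le_mul_of_mul_le_of_forall_le_add_div {S L c d α β : ℝ} (hα : 0 < α) (hβ : 0 < β)
    (hd : 0 < d) (hS : α * S ≤ β * d * L) (hL : ∀ m > 0, L ≤ m * c + S / (2 * m)) :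
    L ≤ c * (1 + (β / α) ^ 2) * d := by
  -- at `m₀ = β d / α` the `S`-term of `hL`, inserted into `hS`, is `α S / 2` and gets absorbed
  set m₀ := β * d / α
  have hm₀ : 0 < m₀ := by positivity
  have hm₀α : m₀ * α = β * d := div_mul_cancel₀ _ hα.ne'
  have hSm₀ : β * d * (S / (2 * m₀)) = α * S / 2 := by
    field_simp
    linear_combination -S * hm₀α
  have hcm₀ : β * d * (m₀ * c) = α * (c * (β / α) ^ 2 * d * d) := by
    field_simp
    linear_combination c * hm₀α
  have hS₂ : α * S ≤ α * (c * (β / α) ^ 2 * d * d) + α * S / 2 := by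
    rw [← hcm₀, ← hSm₀, ← mul_add]
    exact hS.trans (mul_le_mul_of_nonneg_left (hL m₀ hm₀) (by positivity))
  have hSd : S / (2 * d) ≤ c * (β / α) ^ 2 * d := by
    rw [div_le_iff₀ (by positivity)]
    nlinarith
  linarith [hL d hd]

section IntegralEquations

variable {E : Type*} [NormedAddCommGroup E] [NormedSpace ℝ E] [CompleteSpace E]
  {F Φ : ℝ → E} {a b u : ℝ} {c : E}

theorem hasDerivAt_of_forall_eq_add_integral (hF : ContinuousOn F (Icc a b))
    (hΦ : ∀ v ∈ Icc a b, Φ v = c + ∫ r in a..v, F r) (hu : u ∈ Ioo a b) :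
    HasDerivAt Φ (F u) u := by
  have hint : IntervalIntegrable F volume a u :=
    (hF.mono (uIcc_subset_Icc (left_mem_Icc.2 (hu.1.trans hu.2).le)
      (Ioo_subset_Icc_self hu))).intervalIntegrable
  have hprim := (integral_hasDerivAt_right hint
    ((hF.mono Ioo_subset_Icc_self).stronglyMeasurableAtFilter isOpen_Ioo u hu)
    (hF.continuousAt (Icc_mem_nhds hu.1 hu.2))).const_add c
  exact hprim.congr_of_eventuallyEq (Filter.eventually_of_mem (Icc_mem_nhds hu.1 hu.2) hΦ)

theorem hasDerivAt_of_forall_eq_add_integral_to (hF : ContinuousOn F (Icc a b))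
    (hΦ : ∀ v ∈ Icc a b, Φ v = c + ∫ r in v..b, F r) (hu : u ∈ Ioo a b) :
    HasDerivAt Φ (-F u) u := by
  have hint : IntervalIntegrable F volume u b :=
    (hF.mono (uIcc_subset_Icc (Ioo_subset_Icc_self hu)
      (right_mem_Icc.2 (hu.1.trans hu.2).le))).intervalIntegrable
  have hprim := (integral_hasDerivAt_left hint
    ((hF.mono Ioo_subset_Icc_self).stronglyMeasurableAtFilter isOpen_Ioo u hu)
    (hF.continuousAt (Icc_mem_nhds hu.1 hu.2))).const_add c
  exact hprim.congr_of_eventuallyEq (Filter.eventually_of_mem (Icc_mem_nhds hu.1 hu.2) hΦ)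

end IntegralEquations

theorem norm_integral_le_integral_of_norm_le_of_subset {E : Type*} [NormedAddCommGroup E]
    [NormedSpace ℝ E] {F : ℝ → E} {N : ℝ → ℝ} {a b s s' : ℝ} (hN : ContinuousOn N (Icc a b))
    (hFN : ∀ r ∈ Icc a b, ‖F r‖ ≤ N r) (has : a ≤ s) (hss' : s ≤ s') (hs'b : s' ≤ b) :
    ‖∫ r in s..s', F r‖ ≤ ∫ r in a..b, N r := by
  have hsub : Icc s s' ⊆ Icc a b := Icc_subset_Icc has hs'b
  have hNs : IntervalIntegrable N volume s s' :=
    (hN.mono ((uIcc_of_le hss').symm ▸ hsub)).intervalIntegrable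
  have hNab : IntervalIntegrable N volume a b :=
    (hN.mono (uIcc_of_le (has.trans (hss'.trans hs'b))).subset).intervalIntegrable
  refine (norm_integral_le_of_norm_le hss' (ae_of_all _ fun r hr => hFN r
    (hsub (Ioc_subset_Icc_self hr))) hNs).trans (integral_mono_interval has hss' hs'b ?_ hNab)
  exact (ae_restrict_iff' measurableSet_Ioc).2 (ae_of_all _ fun r hr =>
    (norm_nonneg _).trans (hFN r (Ioc_subset_Icc_self hr)))

theorem integral_add_le_mul_add_integral_sq_div {p q : ℝ → ℝ} {a b m : ℝ} (hab : a ≤ b)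
    (hm : 0 < m) (hp : ContinuousOn p (Icc a b)) (hq : ContinuousOn q (Icc a b)) :
    ∫ u in a..b, (p u + q u) ≤ m * (b - a) + (∫ u in a..b, (p u ^ 2 + q u ^ 2)) / (2 * m) := by
  rw [← uIcc_of_le hab] at hp hq
  have hsq : IntervalIntegrable (fun u => (p u ^ 2 + q u ^ 2) / (2 * m)) volume a b :=
    ((hp.pow 2).add (hq.pow 2)).div_const _ |>.intervalIntegrable
  calc ∫ u in a..b, (p u + q u)
      ≤ ∫ u in a..b, (m + (p u ^ 2 + q u ^ 2) / (2 * m)) := by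
        refine integral_mono_on hab (hp.add hq).intervalIntegrable
          (intervalIntegrable_const.add hsq) fun u _ => ?_
        linarith [le_div_two_add_sq_div (p := p u) hm, le_div_two_add_sq_div (p := q u) hm,
          add_div (p u ^ 2) (q u ^ 2) (2 * m)]
    _ = m * (b - a) + (∫ u in a..b, (p u ^ 2 + q u ^ 2)) / (2 * m) := by
        rw [integral_add intervalIntegrable_const hsq, intervalIntegral.integral_const,
          intervalIntegral.integral_div, smul_eq_mul, mul_comm]

theorem inner_add_mul_integral_le_inner_of_hasDerivAt {E : Type*} [NormedAddCommGroup E]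
    [InnerProductSpace ℝ E] {ξ η ξ' η' : ℝ → E} {a b κ : ℝ} (hab : a ≤ b)
    (hξ : ContinuousOn ξ (Icc a b)) (hη : ContinuousOn η (Icc a b))
    (hξ' : ∀ u ∈ Ioo a b, HasDerivAt ξ (ξ' u) u) (hη' : ∀ u ∈ Ioo a b, HasDerivAt η (η' u) u)
    (hdiss : ∀ u ∈ Ioo a b, ⟪ξ u, η' u⟫ + ⟪ξ' u, η u⟫ ≤ -κ * (‖ξ u‖ ^ 2 + ‖η u‖ ^ 2)) :
    ⟪ξ b, η b⟫ + κ * ∫ u in a..b, (‖ξ u‖ ^ 2 + ‖η u‖ ^ 2) ≤ ⟪ξ a, η a⟫ := by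
  set W : ℝ → ℝ := fun u => ‖ξ u‖ ^ 2 + ‖η u‖ ^ 2
  have hW : ContinuousOn W (Icc a b) := (hξ.norm.pow 2).add (hη.norm.pow 2)
  have hprim : ContinuousOn (fun v => ∫ u in a..v, W u) (Icc a b) := by
    rw [← uIcc_of_le hab] at hW ⊢
    exact continuousOn_primitive_interval (hW.integrableOn_compact isCompact_uIcc)
  have hanti : AntitoneOn (fun v => ⟪ξ v, η v⟫ + κ * ∫ u in a..v, W u) (Icc a b) := by
    refine antitoneOn_of_hasDerivWithinAt_nonpos (convex_Icc a b)
      ((hξ.inner hη).add (continuousOn_const.mul hprim))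
      (f' := fun u => ⟪ξ u, η' u⟫ + ⟪ξ' u, η u⟫ + κ * W u) (fun u hu => ?_) (fun u hu => ?_)
    all_goals rw [interior_Icc] at hu
    · have hWu := hasDerivAt_of_forall_eq_add_integral hW (c := 0) (fun v _ => (zero_add _).symm) hu
      exact (((hξ' u hu).inner ℝ (hη' u hu)).add (hWu.const_mul κ)).hasDerivWithinAt
    · linarith [hdiss u hu]
  simpa using hanti (left_mem_Icc.2 hab) (right_mem_Icc.2 hab) hab

section ForwardBackward

variable {n : ℕ} {T C₁ C₂ t : ℝ} {f g : ℝ → Vec n → Vec n → Vec n} {h : Vec n → Vec n}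
  {x y : Vec n} {X Y X₁ Y₁ X₂ Y₂ : ℝ → Vec n}

theorem IsFBSol.continuousOn_comp {φ : ℝ → Vec n → Vec n → Vec n}
    (hφ : ContinuousOn (fun p : ℝ × Vec n × Vec n => φ p.1 p.2.1 p.2.2)
      (Icc t T ×ˢ (univ ×ˢ univ)))
    (hsol : IsFBSol T f g h t x X Y) : ContinuousOn (fun r => φ r (X r) (Y r)) (Icc t T) :=
  hφ.comp (continuousOn_id.prodMk (hsol.1.prodMk hsol.2.1)) fun _ hr => ⟨hr, trivial, trivial⟩

theorem IsFBSol.integral_sub_fst_eq (hsol₁ : IsFBSol T f g h t x X₁ Y₁)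
    (hsol₂ : IsFBSol T f g h t y X₂ Y₂)
    (hf : ContinuousOn (fun p : ℝ × Vec n × Vec n => f p.1 p.2.1 p.2.2)
      (Icc t T ×ˢ (univ ×ˢ univ))) {s : ℝ} (hs : s ∈ Icc t T) :
    X₁ s - X₂ s = x - y + ∫ r in t..s, (f r (X₁ r) (Y₁ r) - f r (X₂ r) (Y₂ r)) := by
  have hsub : uIcc t s ⊆ Icc t T := (uIcc_of_le hs.1).symm ▸ Icc_subset_Icc_right hs.2
  rw [hsol₁.2.2.1 s hs, hsol₂.2.2.1 s hs, add_sub_add_comm, integral_sub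
    ((hsol₁.continuousOn_comp hf).mono hsub).intervalIntegrable
    ((hsol₂.continuousOn_comp hf).mono hsub).intervalIntegrable]

theorem IsFBSol.integral_sub_snd_eq (hsol₁ : IsFBSol T f g h t x X₁ Y₁)
    (hsol₂ : IsFBSol T f g h t y X₂ Y₂)
    (hg : ContinuousOn (fun p : ℝ × Vec n × Vec n => g p.1 p.2.1 p.2.2)
      (Icc t T ×ˢ (univ ×ˢ univ))) {s : ℝ} (hs : s ∈ Icc t T) :
    Y₁ s - Y₂ s = h (X₁ T) - h (X₂ T) + ∫ r in s..T, (g r (X₁ r) (Y₁ r) - g r (X₂ r) (Y₂ r)) := by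
  have hsub : uIcc s T ⊆ Icc t T := (uIcc_of_le hs.2).symm ▸ Icc_subset_Icc_left hs.1
  rw [hsol₁.2.2.2 s hs, hsol₂.2.2.2 s hs, add_sub_add_comm, integral_sub
    ((hsol₁.continuousOn_comp hg).mono hsub).intervalIntegrable
    ((hsol₂.continuousOn_comp hg).mono hsub).intervalIntegrable]

theorem IsFBSol.norm_sub_fst_le (hsol₁ : IsFBSol T f g h t x X₁ Y₁)
    (hsol₂ : IsFBSol T f g h t y X₂ Y₂)
    (hf : ContinuousOn (fun p : ℝ × Vec n × Vec n => f p.1 p.2.1 p.2.2)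
      (Icc t T ×ˢ (univ ×ˢ univ)))
    (hf_lip : ∀ r ∈ Icc t T, ∀ x₁ x₂ y₁ y₂ : Vec n,
      ‖f r x₁ y₁ - f r x₂ y₂‖ ≤ C₁ * (‖x₁ - x₂‖ + ‖y₁ - y₂‖)) {s : ℝ} (hs : s ∈ Icc t T) :
    ‖X₁ s - X₂ s‖ ≤ ‖x - y‖ + C₁ * ∫ r in t..T, (‖X₁ r - X₂ r‖ + ‖Y₁ r - Y₂ r‖) := by
  rw [hsol₁.integral_sub_fst_eq hsol₂ hf hs, ← intervalIntegral.integral_const_mul]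
  refine (norm_add_le _ _).trans (add_le_add le_rfl ?_)
  refine norm_integral_le_integral_of_norm_le_of_subset ?_ (fun r hr => hf_lip r hr _ _ _ _)
    le_rfl hs.1 hs.2
  exact continuousOn_const.mul ((hsol₁.1.sub hsol₂.1).norm.add (hsol₁.2.1.sub hsol₂.2.1).norm)

theorem IsFBSol.norm_sub_snd_le (hsol₁ : IsFBSol T f g h t x X₁ Y₁)
    (hsol₂ : IsFBSol T f g h t y X₂ Y₂)
    (hg : ContinuousOn (fun p : ℝ × Vec n × Vec n => g p.1 p.2.1 p.2.2)
      (Icc t T ×ˢ (univ ×ˢ univ)))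
    (hg_lip : ∀ r ∈ Icc t T, ∀ x₁ x₂ y₁ y₂ : Vec n,
      ‖g r x₁ y₁ - g r x₂ y₂‖ ≤ C₁ * (‖x₁ - x₂‖ + ‖y₁ - y₂‖))
    (hh_lip : ∀ x₁ x₂ : Vec n, ‖h x₁ - h x₂‖ ≤ C₁ * ‖x₁ - x₂‖) {s : ℝ} (hs : s ∈ Icc t T) :
    ‖Y₁ s - Y₂ s‖ ≤ C₁ * (‖X₁ T - X₂ T‖ + ∫ r in t..T, (‖X₁ r - X₂ r‖ + ‖Y₁ r - Y₂ r‖)) := by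
  rw [hsol₁.integral_sub_snd_eq hsol₂ hg hs, mul_add, ← intervalIntegral.integral_const_mul]
  refine (norm_add_le _ _).trans (add_le_add (hh_lip _ _)
    (norm_integral_le_integral_of_norm_le_of_subset ?_ (fun r hr => hg_lip r hr _ _ _ _)
      hs.1 hs.2 le_rfl))
  exact continuousOn_const.mul ((hsol₁.1.sub hsol₂.1).norm.add (hsol₁.2.1.sub hsol₂.2.1).norm)

theorem IsFBSol.mul_norm_sq_add_integral_le_inner (hsol₁ : IsFBSol T f g h t x X₁ Y₁)
    (hsol₂ : IsFBSol T f g h t y X₂ Y₂) (htT : t ≤ T)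
    (hf : ContinuousOn (fun p : ℝ × Vec n × Vec n => f p.1 p.2.1 p.2.2)
      (Icc t T ×ˢ (univ ×ˢ univ)))
    (hg : ContinuousOn (fun p : ℝ × Vec n × Vec n => g p.1 p.2.1 p.2.2)
      (Icc t T ×ˢ (univ ×ˢ univ)))
    (hmono : ∀ r ∈ Icc t T, ∀ x₁ x₂ y₁ y₂ : Vec n,
      ⟪-(g r x₁ y₁ - g r x₂ y₂), x₁ - x₂⟫ + ⟪f r x₁ y₁ - f r x₂ y₂, y₁ - y₂⟫
        ≤ -C₂ * (‖x₁ - x₂‖ ^ 2 + ‖y₁ - y₂‖ ^ 2))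
    (hh_mono : ∀ x₁ x₂ : Vec n, C₂ * ‖x₁ - x₂‖ ^ 2 ≤ ⟪h x₁ - h x₂, x₁ - x₂⟫) :
    C₂ * (‖X₁ T - X₂ T‖ ^ 2 + ∫ r in t..T, (‖X₁ r - X₂ r‖ ^ 2 + ‖Y₁ r - Y₂ r‖ ^ 2))
      ≤ ⟪x - y, Y₁ t - Y₂ t⟫ := by
  have hdecay := inner_add_mul_integral_le_inner_of_hasDerivAt htT (hsol₁.1.sub hsol₂.1)
    (hsol₁.2.1.sub hsol₂.2.1)
    (fun u hu => (hasDerivAt_of_forall_eq_add_integral (hsol₁.continuousOn_comp hf) hsol₁.2.2.1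
      hu).sub (hasDerivAt_of_forall_eq_add_integral (hsol₂.continuousOn_comp hf) hsol₂.2.2.1 hu))
    (fun u hu => (hasDerivAt_of_forall_eq_add_integral_to (hsol₁.continuousOn_comp hg)
      hsol₁.2.2.2 hu).sub
        (hasDerivAt_of_forall_eq_add_integral_to (hsol₂.continuousOn_comp hg) hsol₂.2.2.2 hu))
    (κ := C₂) fun u hu => by
      simp only [Pi.sub_apply, neg_sub_neg]
      rw [real_inner_comm, ← neg_sub]
      exact hmono u (Ioo_subset_Icc_self hu) _ _ _ _
  have hterminal : C₂ * ‖X₁ T - X₂ T‖ ^ 2 ≤ ⟪X₁ T - X₂ T, Y₁ T - Y₂ T⟫ := by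
    rw [hsol₁.integral_sub_snd_eq hsol₂ hg (right_mem_Icc.2 htT), integral_same, add_zero,
      real_inner_comm]
    exact hh_mono _ _
  have hinitial : X₁ t - X₂ t = x - y := by
    rw [hsol₁.integral_sub_fst_eq hsol₂ hf (left_mem_Icc.2 htT), integral_same, add_zero]
  simp only [Pi.sub_apply, hinitial] at hdecay
  linarith

theorem IsFBSol.norm_sub_add_integral_le (hsol₁ : IsFBSol T f g h t x X₁ Y₁)
    (hsol₂ : IsFBSol T f g h t y X₂ Y₂) (ht : 0 ≤ t) (htT : t ≤ T) (hxy : x ≠ y)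
    (hf : ContinuousOn (fun p : ℝ × Vec n × Vec n => f p.1 p.2.1 p.2.2)
      (Icc t T ×ˢ (univ ×ˢ univ)))
    (hg : ContinuousOn (fun p : ℝ × Vec n × Vec n => g p.1 p.2.1 p.2.2)
      (Icc t T ×ˢ (univ ×ˢ univ)))
    (hC₁ : 0 < C₁) (hg_lip : ∀ r ∈ Icc t T, ∀ x₁ x₂ y₁ y₂ : Vec n,
      ‖g r x₁ y₁ - g r x₂ y₂‖ ≤ C₁ * (‖x₁ - x₂‖ + ‖y₁ - y₂‖))
    (hh_lip : ∀ x₁ x₂ : Vec n, ‖h x₁ - h x₂‖ ≤ C₁ * ‖x₁ - x₂‖)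
    (hC₂ : 0 < C₂) (hmono : ∀ r ∈ Icc t T, ∀ x₁ x₂ y₁ y₂ : Vec n,
      ⟪-(g r x₁ y₁ - g r x₂ y₂), x₁ - x₂⟫ + ⟪f r x₁ y₁ - f r x₂ y₂, y₁ - y₂⟫
        ≤ -C₂ * (‖x₁ - x₂‖ ^ 2 + ‖y₁ - y₂‖ ^ 2))
    (hh_mono : ∀ x₁ x₂ : Vec n, C₂ * ‖x₁ - x₂‖ ^ 2 ≤ ⟪h x₁ - h x₂, x₁ - x₂⟫) :
    ‖X₁ T - X₂ T‖ + ∫ r in t..T, (‖X₁ r - X₂ r‖ + ‖Y₁ r - Y₂ r‖)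
      ≤ (1 / 2 + T) * (1 + (C₁ / C₂) ^ 2) * ‖x - y‖ := by
  set J := ∫ r in t..T, (‖X₁ r - X₂ r‖ + ‖Y₁ r - Y₂ r‖)
  refine le_mul_of_mul_le_of_forall_le_add_div hC₂ hC₁ (norm_pos_iff.2 (sub_ne_zero.2 hxy))
    (S := ‖X₁ T - X₂ T‖ ^ 2 + ∫ r in t..T, (‖X₁ r - X₂ r‖ ^ 2 + ‖Y₁ r - Y₂ r‖ ^ 2))
    ?_ fun m hm => ?_
  · calc _ ≤ ⟪x - y, Y₁ t - Y₂ t⟫ :=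
          hsol₁.mul_norm_sq_add_integral_le_inner hsol₂ htT hf hg hmono hh_mono
      _ ≤ ‖x - y‖ * ‖Y₁ t - Y₂ t‖ := real_inner_le_norm _ _
      _ ≤ ‖x - y‖ * (C₁ * (‖X₁ T - X₂ T‖ + J)) := by
          gcongr
          exact hsol₁.norm_sub_snd_le hsol₂ hg hg_lip hh_lip (left_mem_Icc.2 htT)
      _ = C₁ * ‖x - y‖ * (‖X₁ T - X₂ T‖ + J) := by ring
  · have hXT := le_div_two_add_sq_div (p := ‖X₁ T - X₂ T‖) hm
    have hJ := integral_add_le_mul_add_integral_sq_div htT hm (hsol₁.1.sub hsol₂.1).norm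
      (hsol₁.2.1.sub hsol₂.2.1).norm
    simp only [Pi.sub_apply] at hJ
    have hTt : m * (T - t) ≤ m * T := mul_le_mul_of_nonneg_left (by linarith) hm.le
    rw [add_div]
    linarith

end ForwardBackward

theorem fbsde_lipschitz_in_x_general
    (n : ℕ) (T : ℝ) (hT : 0 < T)
    (f g : ℝ → Vec n → Vec n → Vec n) (h : Vec n → Vec n)
    (hf_cont : ContinuousOn (fun p : ℝ × Vec n × Vec n => f p.1 p.2.1 p.2.2)
      (Icc 0 T ×ˢ (univ ×ˢ univ)))
    (hg_cont : ContinuousOn (fun p : ℝ × Vec n × Vec n => g p.1 p.2.1 p.2.2)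
      (Icc 0 T ×ˢ (univ ×ˢ univ)))
    (C₁ : ℝ) (hC₁ : 0 < C₁)
    (hf_lip : ∀ t ∈ Icc (0:ℝ) T, ∀ x₁ x₂ y₁ y₂ : Vec n,
      ‖f t x₁ y₁ - f t x₂ y₂‖ ≤ C₁ * (‖x₁ - x₂‖ + ‖y₁ - y₂‖))
    (hg_lip : ∀ t ∈ Icc (0:ℝ) T, ∀ x₁ x₂ y₁ y₂ : Vec n,
      ‖g t x₁ y₁ - g t x₂ y₂‖ ≤ C₁ * (‖x₁ - x₂‖ + ‖y₁ - y₂‖))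
    (hh_lip : ∀ x₁ x₂ : Vec n, ‖h x₁ - h x₂‖ ≤ C₁ * ‖x₁ - x₂‖)
    (C₂ : ℝ) (hC₂ : 0 < C₂)
    (hmono : ∀ t ∈ Icc (0:ℝ) T, ∀ x₁ x₂ y₁ y₂ : Vec n,
      ⟪-(g t x₁ y₁ - g t x₂ y₂), x₁ - x₂⟫ + ⟪f t x₁ y₁ - f t x₂ y₂, y₁ - y₂⟫
        ≤ -C₂ * (‖x₁ - x₂‖ ^ 2 + ‖y₁ - y₂‖ ^ 2))
    (hh_mono : ∀ x₁ x₂ : Vec n, C₂ * ‖x₁ - x₂‖ ^ 2 ≤ ⟪h x₁ - h x₂, x₁ - x₂⟫)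
    (X Y : ℝ → Vec n → ℝ → Vec n)
    (hsol : ∀ t ∈ Icc (0:ℝ) T, ∀ x : Vec n, IsFBSol T f g h t x (X t x) (Y t x))
    : ∃ C : ℝ, 0 < C ∧ ∀ t ∈ Icc (0:ℝ) T, ∀ x y : Vec n, ∀ s ∈ Icc t T,
      ‖X t x s - X t y s‖ ^ 2 ≤ C * ‖x - y‖ ^ 2 ∧
      ‖Y t x s - Y t y s‖ ^ 2 ≤ C * ‖x - y‖ ^ 2 := by
  set κ := (1 / 2 + T) * (1 + (C₁ / C₂) ^ 2)
  refine ⟨(1 + C₁ * κ) ^ 2, by positivity, fun t ht x y s hs => ?_⟩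
  rcases eq_or_ne x y with rfl | hxy
  · simp
  have hsub : Icc t T ⊆ Icc 0 T := Icc_subset_Icc_left ht.1
  have hf := hf_cont.mono (prod_mono_left hsub)
  have hg := hg_cont.mono (prod_mono_left hsub)
  have hf_lip' := fun r hr => hf_lip r (hsub hr)
  have hg_lip' := fun r hr => hg_lip r (hsub hr)
  obtain ⟨hsx, hsy⟩ := And.intro (hsol t ht x) (hsol t ht y)
  have hL : ‖X t x T - X t y T‖ + ∫ r in t..T, (‖X t x r - X t y r‖ + ‖Y t x r - Y t y r‖)
      ≤ κ * ‖x - y‖ :=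
    hsx.norm_sub_add_integral_le hsy ht.1 ht.2 hxy hf hg hC₁ hg_lip' hh_lip hC₂
      (fun r hr => hmono r (hsub hr)) hh_mono
  have hCL := mul_le_mul_of_nonneg_left hL hC₁.le
  have hCX : 0 ≤ C₁ * ‖X t x T - X t y T‖ := by positivity
  have hsq : ∀ v : Vec n, ‖v‖ ≤ (1 + C₁ * κ) * ‖x - y‖ →
      ‖v‖ ^ 2 ≤ (1 + C₁ * κ) ^ 2 * ‖x - y‖ ^ 2 := fun v hv =>
    mul_pow (1 + C₁ * κ) ‖x - y‖ 2 ▸ pow_le_pow_left₀ (norm_nonneg v) hv 2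
  constructor
  · refine hsq _ ((hsx.norm_sub_fst_le hsy hf hf_lip' hs).trans ?_)
    linarith
  · refine hsq _ ((hsx.norm_sub_snd_le hsy hg hg_lip' hh_lip hs).trans ?_)
    linarith [norm_nonneg (x - y)]

/-- Deterministic version of the Lipschitz-in-`x` estimate (Lemma 1 of the paper, ε → 0):
there is a constant `C > 0` depending only on the data (independent of `t`) such that
`sup_{s∈[t,T]} ‖X^{t,x}(s) − X^{t,y}(s)‖² ≤ C‖x−y‖²` and likewise for `Y`. -/
theorem fbsde_lipschitz_in_x
    (n : ℕ) (hn : 1 ≤ n) (T : ℝ) (hT : 0 < T)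
    (f g : ℝ → Vec n → Vec n → Vec n) (h : Vec n → Vec n)
    (hf_cont : ContinuousOn (fun p : ℝ × Vec n × Vec n => f p.1 p.2.1 p.2.2)
      (Icc 0 T ×ˢ (univ ×ˢ univ)))
    (hg_cont : ContinuousOn (fun p : ℝ × Vec n × Vec n => g p.1 p.2.1 p.2.2)
      (Icc 0 T ×ˢ (univ ×ˢ univ)))
    (hh_cont : Continuous h)
    (C₁ : ℝ) (hC₁ : 0 < C₁)
    (hf_lip : ∀ t ∈ Icc (0:ℝ) T, ∀ x₁ x₂ y₁ y₂ : Vec n,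
      ‖f t x₁ y₁ - f t x₂ y₂‖ ≤ C₁ * (‖x₁ - x₂‖ + ‖y₁ - y₂‖))
    (hg_lip : ∀ t ∈ Icc (0:ℝ) T, ∀ x₁ x₂ y₁ y₂ : Vec n,
      ‖g t x₁ y₁ - g t x₂ y₂‖ ≤ C₁ * (‖x₁ - x₂‖ + ‖y₁ - y₂‖))
    (hh_lip : ∀ x₁ x₂ : Vec n, ‖h x₁ - h x₂‖ ≤ C₁ * ‖x₁ - x₂‖)
    (C₂ : ℝ) (hC₂ : 0 < C₂)
    (hmono : ∀ t ∈ Icc (0:ℝ) T, ∀ x₁ x₂ y₁ y₂ : Vec n,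
      ⟪-(g t x₁ y₁ - g t x₂ y₂), x₁ - x₂⟫ + ⟪f t x₁ y₁ - f t x₂ y₂, y₁ - y₂⟫
        ≤ -C₂ * (‖x₁ - x₂‖ ^ 2 + ‖y₁ - y₂‖ ^ 2))
    (hh_mono : ∀ x₁ x₂ : Vec n, C₂ * ‖x₁ - x₂‖ ^ 2 ≤ ⟪h x₁ - h x₂, x₁ - x₂⟫)
    (X Y : ℝ → Vec n → ℝ → Vec n)
    (hsol : ∀ t ∈ Icc (0:ℝ) T, ∀ x : Vec n, IsFBSol T f g h t x (X t x) (Y t x))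
    (huniq : ∀ t ∈ Icc (0:ℝ) T, ∀ x : Vec n, ∀ X' Y' : ℝ → Vec n,
      IsFBSol T f g h t x X' Y' → EqOn X' (X t x) (Icc t T) ∧ EqOn Y' (Y t x) (Icc t T))
    : ∃ C : ℝ, 0 < C ∧ ∀ t ∈ Icc (0:ℝ) T, ∀ x y : Vec n, ∀ s ∈ Icc t T,
      ‖X t x s - X t y s‖ ^ 2 ≤ C * ‖x - y‖ ^ 2 ∧
      ‖Y t x s - Y t y s‖ ^ 2 ≤ C * ‖x - y‖ ^ 2 :=
  fbsde_lipschitz_in_x_general n T hT f g h hf_cont hg_cont C₁ hC₁ hf_lip hg_lip hh_lip C₂ hC₂ hmono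
    hh_mono X Y hsol
end
end

section
/- There exists a constant C > 0, independent of t and x, such that for all t ∈ [0,T] and all x ∈ ℝⁿ, sup_{s∈[t,T]} |X^{t,x}(s)|² ≤ C(1 + |x|²) and sup_{s∈[t,T]} |Y^{t,x}(s)|² ≤ C(1 + |x|²). (Deterministic version of the second-moment growth estimate, Lemma 2 of the paper in the limit ε → 0.) -/
/-! Along a solution, the pairing `⟪X, Y⟫` is a Lyapunov quantity. By monotonicity its derivative
`⟪f, Y⟫ - ⟪X, g⟫` is at most `-(C₂/2)(‖X‖ + ‖Y‖)²` plus a term linear in `‖X‖ + ‖Y‖`, its terminal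
value `⟪X T, h (X T)⟫` is at least `C₂‖X T‖²` minus a linear term, and its initial value
`⟪x, Y t⟫` is at most `‖x‖` times a bound linear in `‖X T‖` and `∫ (‖X‖ + ‖Y‖)`. Integrating over
`[t, T]` and absorbing the linear terms into the quadratic ones by Young's inequality bounds
`‖X T‖` and `∫ (‖X‖ + ‖Y‖)` by a multiple of `1 + ‖x‖`, with a constant depending only on
`T, C₁, C₂` and the sizes of `f, g, h` at the origin; the integral equations then bound `X` and `Y`
on all of `[t, T]`. -/

open MeasureTheory Set intervalIntegral RealInnerProductSpace

noncomputable section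

theorem mul_le_half_mul_sq_add_sq_div {c p δ : ℝ} (hδ : 0 < δ) :
    c * p ≤ δ / 2 * p ^ 2 + c ^ 2 / (2 * δ) := by
  have key : δ / 2 * p ^ 2 + c ^ 2 / (2 * δ) - c * p = (δ * p - c) ^ 2 / (2 * δ) := by
    field_simp
    ring
  have : 0 ≤ (δ * p - c) ^ 2 / (2 * δ) := by positivity
  linarith

theorem sq_le_two_mul_sq_mul_one_add_sq {u M m : ℝ} (hu : 0 ≤ u) (h : u ≤ M * (1 + m)) :
    u ^ 2 ≤ 2 * M ^ 2 * (1 + m ^ 2) :=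
  calc u ^ 2 ≤ M ^ 2 * (1 + m) ^ 2 := by rw [← mul_pow]; exact pow_le_pow_left₀ hu h 2
    _ ≤ 2 * M ^ 2 * (1 + m ^ 2) := by nlinarith [mul_nonneg (sq_nonneg M) (sq_nonneg (1 - m))]

section EnergyInequality

variable {T C₁ C₂ K₀ a m I J : ℝ}

def energyConst (T C₁ C₂ K₀ : ℝ) : ℝ :=
  4 * ((K₀ ^ 2 + C₁ ^ 2) * (1 + 2 * T) / C₂ + K₀ * (1 + T)) / C₂

theorem energyConst_nonneg (hT : 0 ≤ T) (hC₂ : 0 < C₂) (hK₀ : 0 ≤ K₀) :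
    0 ≤ energyConst T C₁ C₂ K₀ := by
  unfold energyConst; positivity

theorem sq_le_energyConst_of_energy_le (hT : 0 ≤ T) (hC₂ : 0 < C₂) (hK₀ : 0 ≤ K₀) (hm : 0 ≤ m)
    (hI : 0 ≤ I)
    (henergy : C₂ * a ^ 2 + C₂ / 2 * I ≤ (K₀ + C₁ * m) * (a + J) + K₀ * (1 + T) * m)
    (hyoung : ∀ c δ : ℝ, 0 < δ → c * J ≤ δ / 2 * I + c ^ 2 * T / (2 * δ)) :
    a ^ 2 ≤ energyConst T C₁ C₂ K₀ * (1 + m) ^ 2 ∧ I ≤ energyConst T C₁ C₂ K₀ * (1 + m) ^ 2 := by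
  set b := K₀ + C₁ * m
  set N := 1 + m
  set R := (K₀ ^ 2 + C₁ ^ 2) * (1 + 2 * T) / C₂ + K₀ * (1 + T)
  have hba : b * a ≤ C₂ / 2 * a ^ 2 + b ^ 2 / (2 * C₂) := mul_le_half_mul_sq_add_sq_div hC₂
  have hbJ : b * J ≤ C₂ / 4 * I + b ^ 2 * T / C₂ := by
    convert hyoung b (C₂ / 2) (by positivity) using 2 <;> ring
  have hb : b ^ 2 ≤ 2 * (K₀ ^ 2 + C₁ ^ 2) * N ^ 2 := by
    have hmN : m ^ 2 ≤ N ^ 2 := pow_le_pow_left₀ hm (by linarith) 2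
    have h1N : 1 ≤ N ^ 2 := one_le_pow₀ (by linarith)
    nlinarith [sq_nonneg (K₀ - C₁ * m), mul_le_mul_of_nonneg_left hmN (sq_nonneg C₁),
      mul_le_mul_of_nonneg_left h1N (sq_nonneg K₀)]
  have hbb : b ^ 2 / (2 * C₂) + b ^ 2 * T / C₂ ≤ (K₀ ^ 2 + C₁ ^ 2) * (1 + 2 * T) / C₂ * N ^ 2 := by
    rw [div_add_div _ _ (by positivity) hC₂.ne', div_mul_eq_mul_div,
      div_le_div_iff₀ (by positivity) hC₂]
    nlinarith [mul_le_mul_of_nonneg_right hb (by positivity : (0:ℝ) ≤ (1 + 2 * T) * C₂ * C₂)]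
  have hK₀m : K₀ * (1 + T) * m ≤ K₀ * (1 + T) * N ^ 2 :=
    mul_le_mul_of_nonneg_left (by nlinarith) (by positivity)
  -- the linear terms of `henergy`, split by Young's inequality, are absorbed by the quadratic ones
  have hQ : C₂ * a ^ 2 + C₂ / 2 * I ≤ 2 * R * N ^ 2 := by linarith
  have hR : energyConst T C₁ C₂ K₀ * N ^ 2 = 4 * R * N ^ 2 / C₂ := by
    unfold energyConst; ring
  rw [hR, le_div_iff₀ hC₂, le_div_iff₀ hC₂]
  constructor <;> nlinarith [sq_nonneg a]

theorem le_mul_one_add_of_energy_le (hT : 0 ≤ T) (hC₂ : 0 < C₂) (hK₀ : 0 ≤ K₀) (ha : 0 ≤ a)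
    (hm : 0 ≤ m) (hI : 0 ≤ I)
    (henergy : C₂ * a ^ 2 + C₂ / 2 * I ≤ (K₀ + C₁ * m) * (a + J) + K₀ * (1 + T) * m)
    (hyoung : ∀ c δ : ℝ, 0 < δ → c * J ≤ δ / 2 * I + c ^ 2 * T / (2 * δ)) :
    a ≤ (energyConst T C₁ C₂ K₀ + T + 1) * (1 + m) ∧
      J ≤ (energyConst T C₁ C₂ K₀ + T + 1) * (1 + m) := by
  obtain ⟨ha2, hI2⟩ := sq_le_energyConst_of_energy_le hT hC₂ hK₀ hm hI henergy hyoung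
  set B := energyConst T C₁ C₂ K₀
  have hB : 0 ≤ B := energyConst_nonneg hT hC₂ hK₀
  have hN : 0 < 1 + m := by linarith
  constructor
  · have : a ^ 2 ≤ ((B + T + 1) * (1 + m)) ^ 2 := by
      have hB' : B ≤ (B + T + 1) ^ 2 := by nlinarith
      rw [mul_pow]
      nlinarith [mul_le_mul_of_nonneg_right hB' (sq_nonneg (1 + m))]
    exact (pow_le_pow_iff_left₀ ha (by positivity) two_ne_zero).1 this
  · -- Young's inequality with weight `c = 1 + m` turns the bound on `I` into one on `J`
    have hJ : (1 + m) * J ≤ (1 + m) * ((B + T) / 2 * (1 + m)) := by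
      nlinarith [hyoung (1 + m) 1 one_pos]
    nlinarith [le_of_mul_le_mul_left hJ hN]

end EnergyInequality

section IntervalIntegral

variable {a b : ℝ}

theorem mul_integral_le_half_mul_integral_sq_add {p : ℝ → ℝ} (hab : a ≤ b)
    (hp : ContinuousOn p (Icc a b)) (c : ℝ) {δ : ℝ} (hδ : 0 < δ) :
    c * (∫ r in a..b, p r) ≤ δ / 2 * (∫ r in a..b, p r ^ 2) + c ^ 2 * (b - a) / (2 * δ) := by
  have hp_int : IntervalIntegrable p volume a b := hp.intervalIntegrable_of_Icc hab
  have hp2_int : IntervalIntegrable (fun r => p r ^ 2) volume a b :=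
    (hp.pow 2).intervalIntegrable_of_Icc hab
  calc c * (∫ r in a..b, p r) = ∫ r in a..b, c * p r :=
        (intervalIntegral.integral_const_mul c p).symm
    _ ≤ ∫ r in a..b, (δ / 2 * p r ^ 2 + c ^ 2 / (2 * δ)) :=
      integral_mono_on hab (hp_int.const_mul c)
        ((hp2_int.const_mul _).add intervalIntegrable_const)
        fun r _ => mul_le_half_mul_sq_add_sq_div hδ
    _ = δ / 2 * (∫ r in a..b, p r ^ 2) + c ^ 2 * (b - a) / (2 * δ) := by
      rw [integral_add (hp2_int.const_mul _) intervalIntegrable_const,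
        intervalIntegral.integral_const_mul, intervalIntegral.integral_const, smul_eq_mul]
      ring

variable {E : Type*} [NormedAddCommGroup E] [InnerProductSpace ℝ E] {x y : E} {X Y F G : ℝ → E}

theorem norm_integral_le_integral_of_subset {g : ℝ → ℝ} {u v : ℝ} (hau : a ≤ u) (huv : u ≤ v)
    (hvb : v ≤ b) (hg : ContinuousOn g (Icc a b)) (hFg : ∀ r ∈ Icc a b, ‖F r‖ ≤ g r) :
    ‖∫ r in u..v, F r‖ ≤ ∫ r in a..b, g r := by
  have hsub : Icc u v ⊆ Icc a b := Icc_subset_Icc hau hvb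
  calc ‖∫ r in u..v, F r‖ ≤ ∫ r in u..v, g r :=
        norm_integral_le_of_norm_le huv
          (ae_of_all _ fun r hr => hFg r (hsub (Ioc_subset_Icc_self hr)))
          ((hg.mono hsub).intervalIntegrable_of_Icc huv)
    _ ≤ ∫ r in a..b, g r :=
        integral_mono_interval hau huv hvb
          ((ae_restrict_iff' measurableSet_Ioc).2 (ae_of_all _ fun r hr =>
            (norm_nonneg _).trans (hFg r (Ioc_subset_Icc_self hr))))
          (hg.intervalIntegrable_of_Icc (hau.trans (huv.trans hvb)))

variable [CompleteSpace E]

theorem hasDerivAt_of_eq_add_integral_right (hF : ContinuousOn F (Icc a b))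
    (hX : ∀ s ∈ Icc a b, X s = x + ∫ r in a..s, F r) {s : ℝ} (hs : s ∈ Ioo a b) :
    HasDerivAt X (F s) s := by
  have hmem : Icc a b ∈ nhds s := Icc_mem_nhds hs.1 hs.2
  have hFs : HasDerivAt (fun u => ∫ r in a..u, F r) (F s) s :=
    integral_hasDerivAt_right
      ((hF.mono (Icc_subset_Icc le_rfl hs.2.le)).intervalIntegrable_of_Icc hs.1.le)
      ⟨Icc a b, hmem, hF.aestronglyMeasurable measurableSet_Icc⟩ (hF.continuousAt hmem)
  exact (hFs.const_add x).congr_of_eventuallyEq (Filter.eventuallyEq_of_mem hmem hX)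

theorem hasDerivAt_of_eq_add_integral_left (hG : ContinuousOn G (Icc a b))
    (hY : ∀ s ∈ Icc a b, Y s = y + ∫ r in s..b, G r) {s : ℝ} (hs : s ∈ Ioo a b) :
    HasDerivAt Y (-G s) s := by
  have hmem : Icc a b ∈ nhds s := Icc_mem_nhds hs.1 hs.2
  have hGs : HasDerivAt (fun u => ∫ r in u..b, G r) (-G s) s :=
    integral_hasDerivAt_left
      ((hG.mono (Icc_subset_Icc hs.1.le le_rfl)).intervalIntegrable_of_Icc hs.2.le)
      ⟨Icc a b, hmem, hG.aestronglyMeasurable measurableSet_Icc⟩ (hG.continuousAt hmem)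
  exact (hGs.const_add y).congr_of_eventuallyEq (Filter.eventuallyEq_of_mem hmem hY)

theorem integral_inner_sub_inner_eq (hab : a ≤ b) (hXc : ContinuousOn X (Icc a b))
    (hYc : ContinuousOn Y (Icc a b)) (hF : ContinuousOn F (Icc a b))
    (hG : ContinuousOn G (Icc a b)) (hX : ∀ s ∈ Icc a b, X s = x + ∫ r in a..s, F r)
    (hY : ∀ s ∈ Icc a b, Y s = y + ∫ r in s..b, G r) :
    ∫ r in a..b, (⟪F r, Y r⟫ - ⟪X r, G r⟫) = ⟪X b, Y b⟫ - ⟪X a, Y a⟫ := by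
  have hψ : ContinuousOn (fun r => ⟪F r, Y r⟫ - ⟪X r, G r⟫) (Icc a b) :=
    (hF.inner hYc).sub (hXc.inner hG)
  refine integral_eq_sub_of_hasDeriv_right_of_le hab (hXc.inner hYc) (fun s hs => ?_)
    (hψ.intervalIntegrable_of_Icc hab)
  have hd := (hasDerivAt_of_eq_add_integral_right hF hX hs).inner ℝ
    (hasDerivAt_of_eq_add_integral_left hG hY hs)
  rw [inner_neg_right, add_comm, ← sub_eq_add_neg] at hd
  exact hd.hasDerivWithinAt

end IntervalIntegral

section ForwardBackward

variable {E : Type*} [NormedAddCommGroup E] [InnerProductSpace ℝ E]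
  {t T K₀ C₁ C₂ : ℝ} {x y : E} {X Y F G : ℝ → E}

theorem norm_le_add_integral_of_forwardBackward (htT : t ≤ T) (hXc : ContinuousOn X (Icc t T))
    (hYc : ContinuousOn Y (Icc t T)) (hX : ∀ s ∈ Icc t T, X s = x + ∫ r in t..s, F r)
    (hY : ∀ s ∈ Icc t T, Y s = y + ∫ r in s..T, G r)
    (hF_le : ∀ r ∈ Icc t T, ‖F r‖ ≤ K₀ + C₁ * (‖X r‖ + ‖Y r‖))
    (hG_le : ∀ r ∈ Icc t T, ‖G r‖ ≤ K₀ + C₁ * (‖X r‖ + ‖Y r‖)) (s : ℝ) (hs : s ∈ Icc t T) :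
    ‖X s‖ ≤ ‖x‖ + (K₀ * (T - t) + C₁ * ∫ r in t..T, (‖X r‖ + ‖Y r‖)) ∧
      ‖Y s‖ ≤ ‖y‖ + (K₀ * (T - t) + C₁ * ∫ r in t..T, (‖X r‖ + ‖Y r‖)) := by
  have hp : ContinuousOn (fun r => ‖X r‖ + ‖Y r‖) (Icc t T) := hXc.norm.add hYc.norm
  have hg : ContinuousOn (fun r => K₀ + C₁ * (‖X r‖ + ‖Y r‖)) (Icc t T) :=
    continuousOn_const.add (hp.const_smul C₁)
  have hgint : ∫ r in t..T, (K₀ + C₁ * (‖X r‖ + ‖Y r‖)) =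
      K₀ * (T - t) + C₁ * ∫ r in t..T, (‖X r‖ + ‖Y r‖) := by
    rw [integral_add intervalIntegrable_const ((hp.intervalIntegrable_of_Icc htT).const_mul _),
      intervalIntegral.integral_const, intervalIntegral.integral_const_mul, smul_eq_mul, mul_comm]
  rw [hX s hs, hY s hs, ← hgint]
  exact ⟨(norm_add_le _ _).trans (add_le_add le_rfl
      (norm_integral_le_integral_of_subset le_rfl hs.1 hs.2 hg hF_le)),
    (norm_add_le _ _).trans (add_le_add le_rfl
      (norm_integral_le_integral_of_subset hs.1 hs.2 le_rfl hg hG_le))⟩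

variable [CompleteSpace E]

theorem energy_le_of_forwardBackward (htT : t ≤ T) (hXc : ContinuousOn X (Icc t T))
    (hYc : ContinuousOn Y (Icc t T)) (hF : ContinuousOn F (Icc t T))
    (hG : ContinuousOn G (Icc t T)) (hX : ∀ s ∈ Icc t T, X s = x + ∫ r in t..s, F r)
    (hY : ∀ s ∈ Icc t T, Y s = y + ∫ r in s..T, G r)
    (hdrift : ∀ r ∈ Icc t T, ⟪F r, Y r⟫ - ⟪X r, G r⟫ ≤
      -(C₂ / 2) * (‖X r‖ + ‖Y r‖) ^ 2 + K₀ * (‖X r‖ + ‖Y r‖))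
    (hterm : C₂ * ‖X T‖ ^ 2 - K₀ * ‖X T‖ ≤ ⟪X T, y⟫) :
    C₂ * ‖X T‖ ^ 2 + C₂ / 2 * (∫ r in t..T, (‖X r‖ + ‖Y r‖) ^ 2) ≤
      K₀ * ‖X T‖ + K₀ * (∫ r in t..T, (‖X r‖ + ‖Y r‖)) + ‖x‖ * ‖Y t‖ := by
  have hp : ContinuousOn (fun r => ‖X r‖ + ‖Y r‖) (Icc t T) := hXc.norm.add hYc.norm
  have hp_int : IntervalIntegrable (fun r => ‖X r‖ + ‖Y r‖) volume t T :=
    hp.intervalIntegrable_of_Icc htT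
  have hp2_int : IntervalIntegrable (fun r => (‖X r‖ + ‖Y r‖) ^ 2) volume t T :=
    (hp.pow 2).intervalIntegrable_of_Icc htT
  have hdrift_int : ∫ r in t..T, (⟪F r, Y r⟫ - ⟪X r, G r⟫) ≤
      -(C₂ / 2) * (∫ r in t..T, (‖X r‖ + ‖Y r‖) ^ 2) + K₀ * ∫ r in t..T, (‖X r‖ + ‖Y r‖) :=
    calc ∫ r in t..T, (⟪F r, Y r⟫ - ⟪X r, G r⟫)
        ≤ ∫ r in t..T, (-(C₂ / 2) * (‖X r‖ + ‖Y r‖) ^ 2 + K₀ * (‖X r‖ + ‖Y r‖)) :=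
          integral_mono_on htT
            (((hF.inner hYc).sub (hXc.inner hG)).intervalIntegrable_of_Icc htT)
            ((hp2_int.const_mul _).add (hp_int.const_mul _)) hdrift
      _ = _ := by
          rw [integral_add (hp2_int.const_mul _) (hp_int.const_mul _),
            intervalIntegral.integral_const_mul, intervalIntegral.integral_const_mul]
  have hXt : X t = x := by simpa using hX t ⟨le_rfl, htT⟩
  have hYT : Y T = y := by simpa using hY T ⟨htT, le_rfl⟩
  rw [integral_inner_sub_inner_eq htT hXc hYc hF hG hX hY, hXt, hYT] at hdrift_int
  linarith [real_inner_le_norm x (Y t)]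

def growthConst (T C₁ C₂ K₀ : ℝ) : ℝ :=
  1 + K₀ * (1 + T) + 2 * C₁ * (energyConst T C₁ C₂ K₀ + T + 1)

theorem norm_le_growthConst_of_forwardBackward (ht : 0 ≤ t) (htT : t ≤ T) (hC₁ : 0 ≤ C₁)
    (hC₂ : 0 < C₂) (hK₀ : 0 ≤ K₀) (hXc : ContinuousOn X (Icc t T))
    (hYc : ContinuousOn Y (Icc t T)) (hF : ContinuousOn F (Icc t T))
    (hG : ContinuousOn G (Icc t T)) (hX : ∀ s ∈ Icc t T, X s = x + ∫ r in t..s, F r)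
    (hY : ∀ s ∈ Icc t T, Y s = y + ∫ r in s..T, G r)
    (hF_le : ∀ r ∈ Icc t T, ‖F r‖ ≤ K₀ + C₁ * (‖X r‖ + ‖Y r‖))
    (hG_le : ∀ r ∈ Icc t T, ‖G r‖ ≤ K₀ + C₁ * (‖X r‖ + ‖Y r‖))
    (hdrift : ∀ r ∈ Icc t T, ⟪F r, Y r⟫ - ⟪X r, G r⟫ ≤
      -(C₂ / 2) * (‖X r‖ + ‖Y r‖) ^ 2 + K₀ * (‖X r‖ + ‖Y r‖))
    (hterm : C₂ * ‖X T‖ ^ 2 - K₀ * ‖X T‖ ≤ ⟪X T, y⟫) (hy : ‖y‖ ≤ K₀ + C₁ * ‖X T‖) :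
    ∀ s ∈ Icc t T, ‖X s‖ ≤ growthConst T C₁ C₂ K₀ * (1 + ‖x‖) ∧
      ‖Y s‖ ≤ growthConst T C₁ C₂ K₀ * (1 + ‖x‖) := by
  have hp : ContinuousOn (fun r => ‖X r‖ + ‖Y r‖) (Icc t T) := hXc.norm.add hYc.norm
  have henergy := energy_le_of_forwardBackward htT hXc hYc hF hG hX hY hdrift hterm
  have hsup := norm_le_add_integral_of_forwardBackward htT hXc hYc hX hY hF_le hG_le
  set J := ∫ r in t..T, (‖X r‖ + ‖Y r‖)
  set A := energyConst T C₁ C₂ K₀ + T + 1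
  have hK₀t : K₀ * (T - t) ≤ K₀ * T := by nlinarith
  have hbound : ∀ s ∈ Icc t T, ‖X s‖ ≤ ‖x‖ + (K₀ * T + C₁ * J) ∧
      ‖Y s‖ ≤ K₀ + C₁ * ‖X T‖ + (K₀ * T + C₁ * J) := fun s hs => by
    obtain ⟨hXs, hYs⟩ := hsup s hs
    constructor <;> linarith [norm_nonneg x]
  have hYt := mul_le_mul_of_nonneg_left (hbound t ⟨le_rfl, htT⟩).2 (norm_nonneg x)
  obtain ⟨hXT, hJ⟩ : ‖X T‖ ≤ A * (1 + ‖x‖) ∧ J ≤ A * (1 + ‖x‖) := by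
    refine le_mul_one_add_of_energy_le (I := ∫ r in t..T, (‖X r‖ + ‖Y r‖) ^ 2) (ht.trans htT)
      hC₂ hK₀ (norm_nonneg _) (norm_nonneg _) (integral_nonneg htT fun r _ => sq_nonneg _)
      (by linarith) fun c δ hδ => ?_
    refine (mul_integral_le_half_mul_integral_sq_add htT hp c hδ).trans ?_
    gcongr
    linarith
  have hA : 0 ≤ A * (1 + ‖x‖) := (norm_nonneg _).trans hXT
  have hK₀T : K₀ * (1 + T) ≤ K₀ * (1 + T) * (1 + ‖x‖) :=
    le_mul_of_one_le_right (by nlinarith) (le_add_of_nonneg_right (norm_nonneg x))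
  have hC₁J := mul_le_mul_of_nonneg_left hJ hC₁
  have hC₁X := mul_le_mul_of_nonneg_left hXT hC₁
  have hC₁A := mul_nonneg hC₁ hA
  intro s hs
  obtain ⟨hXs, hYs⟩ := hbound s hs
  rw [show growthConst T C₁ C₂ K₀ = 1 + K₀ * (1 + T) + 2 * C₁ * A from rfl]
  constructor <;> linarith [norm_nonneg x]

end ForwardBackward

section Monotone

variable {E : Type*} [NormedAddCommGroup E] [InnerProductSpace ℝ E] {C₂ K₀ : ℝ}

theorem inner_sub_inner_le_of_monotone {u v F G f₀ g₀ : E} (hC₂ : 0 ≤ C₂) (hf₀ : ‖f₀‖ ≤ K₀)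
    (hg₀ : ‖g₀‖ ≤ K₀) (hmono : ⟪-(G - g₀), u⟫ + ⟪F - f₀, v⟫ ≤ -C₂ * (‖u‖ ^ 2 + ‖v‖ ^ 2)) :
    ⟪F, v⟫ - ⟪u, G⟫ ≤ -(C₂ / 2) * (‖u‖ + ‖v‖) ^ 2 + K₀ * (‖u‖ + ‖v‖) := by
  have hsplit : ⟪-(G - g₀), u⟫ + ⟪F - f₀, v⟫ = (⟪F, v⟫ - ⟪u, G⟫) + ⟪g₀, u⟫ - ⟪f₀, v⟫ := by
    simp only [inner_neg_left, inner_sub_left, real_inner_comm u G]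
    ring
  have hg₀u : -(K₀ * ‖u‖) ≤ ⟪g₀, u⟫ :=
    neg_le_of_abs_le ((abs_real_inner_le_norm g₀ u).trans
      (mul_le_mul_of_nonneg_right hg₀ (norm_nonneg u)))
  have hf₀v : ⟪f₀, v⟫ ≤ K₀ * ‖v‖ :=
    (real_inner_le_norm f₀ v).trans (mul_le_mul_of_nonneg_right hf₀ (norm_nonneg v))
  nlinarith [mul_nonneg hC₂ (sq_nonneg (‖u‖ - ‖v‖))]

theorem mul_sq_sub_le_inner_of_le_inner {u w w₀ : E} (hmono : C₂ * ‖u‖ ^ 2 ≤ ⟪w - w₀, u⟫)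
    (hw₀ : ‖w₀‖ ≤ K₀) : C₂ * ‖u‖ ^ 2 - K₀ * ‖u‖ ≤ ⟪u, w⟫ := by
  have hw₀u : -(K₀ * ‖u‖) ≤ ⟪w₀, u⟫ :=
    neg_le_of_abs_le ((abs_real_inner_le_norm w₀ u).trans
      (mul_le_mul_of_nonneg_right hw₀ (norm_nonneg u)))
  rw [inner_sub_left, real_inner_comm] at hmono
  linarith

end Monotone

theorem exists_forall_norm_apply_le {E F : Type*} [TopologicalSpace E] [SeminormedAddGroup F]
    {φ : ℝ → E → E → F} {a b : ℝ}
    (hφ : ContinuousOn (fun p : ℝ × E × E => φ p.1 p.2.1 p.2.2) (Icc a b ×ˢ (univ ×ˢ univ)))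
    (u v : E) : ∃ K, ∀ r ∈ Icc a b, ‖φ r u v‖ ≤ K :=
  isCompact_Icc.exists_bound_of_continuousOn
    (hφ.comp (f := fun r => (r, u, v)) (by fun_prop) fun _ hr => ⟨hr, mem_univ _, mem_univ _⟩)

theorem exists_norm_le_of_isFBSol {n : ℕ} {T : ℝ} (hT : 0 ≤ T)
    {f g : ℝ → Vec n → Vec n → Vec n} {h : Vec n → Vec n}
    (hf_cont : ContinuousOn (fun p : ℝ × Vec n × Vec n => f p.1 p.2.1 p.2.2)
      (Icc 0 T ×ˢ (univ ×ˢ univ)))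
    (hg_cont : ContinuousOn (fun p : ℝ × Vec n × Vec n => g p.1 p.2.1 p.2.2)
      (Icc 0 T ×ˢ (univ ×ˢ univ)))
    {C₁ : ℝ} (hC₁ : 0 ≤ C₁)
    (hf_lip : ∀ t ∈ Icc (0:ℝ) T, ∀ x₁ x₂ y₁ y₂ : Vec n,
      ‖f t x₁ y₁ - f t x₂ y₂‖ ≤ C₁ * (‖x₁ - x₂‖ + ‖y₁ - y₂‖))
    (hg_lip : ∀ t ∈ Icc (0:ℝ) T, ∀ x₁ x₂ y₁ y₂ : Vec n,
      ‖g t x₁ y₁ - g t x₂ y₂‖ ≤ C₁ * (‖x₁ - x₂‖ + ‖y₁ - y₂‖))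
    (hh_lip : ∀ x₁ x₂ : Vec n, ‖h x₁ - h x₂‖ ≤ C₁ * ‖x₁ - x₂‖)
    {C₂ : ℝ} (hC₂ : 0 < C₂)
    (hmono : ∀ t ∈ Icc (0:ℝ) T, ∀ x₁ x₂ y₁ y₂ : Vec n,
      ⟪-(g t x₁ y₁ - g t x₂ y₂), x₁ - x₂⟫ + ⟪f t x₁ y₁ - f t x₂ y₂, y₁ - y₂⟫
        ≤ -C₂ * (‖x₁ - x₂‖ ^ 2 + ‖y₁ - y₂‖ ^ 2))
    (hh_mono : ∀ x₁ x₂ : Vec n, C₂ * ‖x₁ - x₂‖ ^ 2 ≤ ⟪h x₁ - h x₂, x₁ - x₂⟫) :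
    ∃ M, 0 < M ∧ ∀ t ∈ Icc (0:ℝ) T, ∀ (x : Vec n) (X Y : ℝ → Vec n), IsFBSol T f g h t x X Y →
      ∀ s ∈ Icc t T, ‖X s‖ ≤ M * (1 + ‖x‖) ∧ ‖Y s‖ ≤ M * (1 + ‖x‖) := by
  obtain ⟨Kf, hKf⟩ := exists_forall_norm_apply_le hf_cont 0 0
  obtain ⟨Kg, hKg⟩ := exists_forall_norm_apply_le hg_cont 0 0
  set K₀ := max (max Kf Kg) ‖h 0‖
  have hK₀ : 0 ≤ K₀ := (norm_nonneg _).trans (le_max_right _ _)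
  have hfK : ∀ r ∈ Icc 0 T, ‖f r 0 0‖ ≤ K₀ := fun r hr =>
    ((hKf r hr).trans (le_max_left _ _)).trans (le_max_left _ _)
  have hgK : ∀ r ∈ Icc 0 T, ‖g r 0 0‖ ≤ K₀ := fun r hr =>
    ((hKg r hr).trans (le_max_right _ _)).trans (le_max_left _ _)
  have hhK : ‖h 0‖ ≤ K₀ := le_max_right _ _
  refine ⟨growthConst T C₁ C₂ K₀, by unfold growthConst energyConst; positivity,
    fun t ht x X Y ⟨hXc, hYc, hX, hY⟩ => ?_⟩
  have hsub : Icc t T ⊆ Icc 0 T := Icc_subset_Icc_left ht.1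
  have hpath : ContinuousOn (fun r => (r, X r, Y r)) (Icc t T) :=
    continuousOn_id.prodMk (hXc.prodMk hYc)
  have hmaps : MapsTo (fun r => (r, X r, Y r)) (Icc t T) (Icc 0 T ×ˢ (univ ×ˢ univ)) :=
    fun r hr => ⟨hsub hr, mem_univ _, mem_univ _⟩
  refine norm_le_growthConst_of_forwardBackward ht.1 ht.2 hC₁ hC₂ hK₀ hXc hYc
    (hf_cont.comp hpath hmaps) (hg_cont.comp hpath hmaps) hX hY (fun r hr => ?_) (fun r hr => ?_)
    (fun r hr => inner_sub_inner_le_of_monotone hC₂.le (hfK r (hsub hr)) (hgK r (hsub hr))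
      (by simpa using hmono r (hsub hr) (X r) 0 (Y r) 0))
    (mul_sq_sub_le_inner_of_le_inner (by simpa using hh_mono (X T) 0) hhK) ?_
  · exact (norm_le_insert' _ (f r 0 0)).trans
      (add_le_add (hfK r (hsub hr)) (by simpa using hf_lip r (hsub hr) (X r) 0 (Y r) 0))
  · exact (norm_le_insert' _ (g r 0 0)).trans
      (add_le_add (hgK r (hsub hr)) (by simpa using hg_lip r (hsub hr) (X r) 0 (Y r) 0))
  · exact (norm_le_insert' _ (h 0)).trans (add_le_add hhK (by simpa using hh_lip (X T) 0))

theorem fbsde_growth_estimate_general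
    (n : ℕ) (T : ℝ) (hT : 0 < T)
    (f g : ℝ → Vec n → Vec n → Vec n) (h : Vec n → Vec n)
    (hf_cont : ContinuousOn (fun p : ℝ × Vec n × Vec n => f p.1 p.2.1 p.2.2)
      (Icc 0 T ×ˢ (univ ×ˢ univ)))
    (hg_cont : ContinuousOn (fun p : ℝ × Vec n × Vec n => g p.1 p.2.1 p.2.2)
      (Icc 0 T ×ˢ (univ ×ˢ univ)))
    (C₁ : ℝ) (hC₁ : 0 < C₁)
    (hf_lip : ∀ t ∈ Icc (0:ℝ) T, ∀ x₁ x₂ y₁ y₂ : Vec n,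
      ‖f t x₁ y₁ - f t x₂ y₂‖ ≤ C₁ * (‖x₁ - x₂‖ + ‖y₁ - y₂‖))
    (hg_lip : ∀ t ∈ Icc (0:ℝ) T, ∀ x₁ x₂ y₁ y₂ : Vec n,
      ‖g t x₁ y₁ - g t x₂ y₂‖ ≤ C₁ * (‖x₁ - x₂‖ + ‖y₁ - y₂‖))
    (hh_lip : ∀ x₁ x₂ : Vec n, ‖h x₁ - h x₂‖ ≤ C₁ * ‖x₁ - x₂‖)
    (C₂ : ℝ) (hC₂ : 0 < C₂)
    (hmono : ∀ t ∈ Icc (0:ℝ) T, ∀ x₁ x₂ y₁ y₂ : Vec n,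
      ⟪-(g t x₁ y₁ - g t x₂ y₂), x₁ - x₂⟫ + ⟪f t x₁ y₁ - f t x₂ y₂, y₁ - y₂⟫
        ≤ -C₂ * (‖x₁ - x₂‖ ^ 2 + ‖y₁ - y₂‖ ^ 2))
    (hh_mono : ∀ x₁ x₂ : Vec n, C₂ * ‖x₁ - x₂‖ ^ 2 ≤ ⟪h x₁ - h x₂, x₁ - x₂⟫)
    (X Y : ℝ → Vec n → ℝ → Vec n)
    (hsol : ∀ t ∈ Icc (0:ℝ) T, ∀ x : Vec n, IsFBSol T f g h t x (X t x) (Y t x))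
    : ∃ C : ℝ, 0 < C ∧ ∀ t ∈ Icc (0:ℝ) T, ∀ x : Vec n, ∀ s ∈ Icc t T,
      ‖X t x s‖ ^ 2 ≤ C * (1 + ‖x‖ ^ 2) ∧
      ‖Y t x s‖ ^ 2 ≤ C * (1 + ‖x‖ ^ 2) := by
  obtain ⟨M, hM, hbound⟩ := exists_norm_le_of_isFBSol hT.le hf_cont hg_cont hC₁.le hf_lip hg_lip
    hh_lip hC₂ hmono hh_mono
  refine ⟨2 * M ^ 2, by positivity, fun t ht x s hs => ?_⟩
  obtain ⟨hXs, hYs⟩ := hbound t ht x _ _ (hsol t ht x) s hs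
  exact ⟨sq_le_two_mul_sq_mul_one_add_sq (norm_nonneg _) hXs,
    sq_le_two_mul_sq_mul_one_add_sq (norm_nonneg _) hYs⟩

/-- Deterministic version of the second-moment growth estimate (Lemma 2 of the paper, ε → 0):
there is a constant `C > 0` independent of `t` and `x` such that
`sup_{s∈[t,T]} ‖X^{t,x}(s)‖² ≤ C(1+‖x‖²)` and likewise for `Y`. -/
theorem fbsde_growth_estimate
    (n : ℕ) (hn : 1 ≤ n) (T : ℝ) (hT : 0 < T)
    (f g : ℝ → Vec n → Vec n → Vec n) (h : Vec n → Vec n)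
    (hf_cont : ContinuousOn (fun p : ℝ × Vec n × Vec n => f p.1 p.2.1 p.2.2)
      (Icc 0 T ×ˢ (univ ×ˢ univ)))
    (hg_cont : ContinuousOn (fun p : ℝ × Vec n × Vec n => g p.1 p.2.1 p.2.2)
      (Icc 0 T ×ˢ (univ ×ˢ univ)))
    (hh_cont : Continuous h)
    (C₁ : ℝ) (hC₁ : 0 < C₁)
    (hf_lip : ∀ t ∈ Icc (0:ℝ) T, ∀ x₁ x₂ y₁ y₂ : Vec n,
      ‖f t x₁ y₁ - f t x₂ y₂‖ ≤ C₁ * (‖x₁ - x₂‖ + ‖y₁ - y₂‖))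
    (hg_lip : ∀ t ∈ Icc (0:ℝ) T, ∀ x₁ x₂ y₁ y₂ : Vec n,
      ‖g t x₁ y₁ - g t x₂ y₂‖ ≤ C₁ * (‖x₁ - x₂‖ + ‖y₁ - y₂‖))
    (hh_lip : ∀ x₁ x₂ : Vec n, ‖h x₁ - h x₂‖ ≤ C₁ * ‖x₁ - x₂‖)
    (C₂ : ℝ) (hC₂ : 0 < C₂)
    (hmono : ∀ t ∈ Icc (0:ℝ) T, ∀ x₁ x₂ y₁ y₂ : Vec n,
      ⟪-(g t x₁ y₁ - g t x₂ y₂), x₁ - x₂⟫ + ⟪f t x₁ y₁ - f t x₂ y₂, y₁ - y₂⟫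
        ≤ -C₂ * (‖x₁ - x₂‖ ^ 2 + ‖y₁ - y₂‖ ^ 2))
    (hh_mono : ∀ x₁ x₂ : Vec n, C₂ * ‖x₁ - x₂‖ ^ 2 ≤ ⟪h x₁ - h x₂, x₁ - x₂⟫)
    (X Y : ℝ → Vec n → ℝ → Vec n)
    (hsol : ∀ t ∈ Icc (0:ℝ) T, ∀ x : Vec n, IsFBSol T f g h t x (X t x) (Y t x))
    (huniq : ∀ t ∈ Icc (0:ℝ) T, ∀ x : Vec n, ∀ X' Y' : ℝ → Vec n,
      IsFBSol T f g h t x X' Y' → EqOn X' (X t x) (Icc t T) ∧ EqOn Y' (Y t x) (Icc t T))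
    : ∃ C : ℝ, 0 < C ∧ ∀ t ∈ Icc (0:ℝ) T, ∀ x : Vec n, ∀ s ∈ Icc t T,
      ‖X t x s‖ ^ 2 ≤ C * (1 + ‖x‖ ^ 2) ∧
      ‖Y t x s‖ ^ 2 ≤ C * (1 + ‖x‖ ^ 2) :=
  fbsde_growth_estimate_general n T hT f g h hf_cont hg_cont C₁ hC₁ hf_lip hg_lip hh_lip C₂ hC₂
    hmono hh_mono X Y hsol
end
end

section
/- There exists a constant C > 0, independent of t₁, t₂ and x, such that for all t₁, t₂ ∈ [0,T] and all x ∈ ℝⁿ, sup_{s∈[t₁∨t₂, T]} |X^{t₁,x}(s) − X^{t₂,x}(s)|² ≤ C|t₁−t₂|(1+|x|²) and sup_{s∈[t₁∨t₂, T]} |Y^{t₁,x}(s) − Y^{t₂,x}(s)|² ≤ C|t₁−t₂|(1+|x|²). (Deterministic version of the continuity-in-t estimate, Lemma 3 of the paper in the limit ε → 0.) -/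
/-!
The estimate rests on one a priori bound for the difference `(P, Q)` of two solutions of
forward–backward systems whose coefficients differ by at most `m`. Differentiating `⟪P, Q⟫` and
using the two monotonicity conditions bounds `‖P T‖²` and `∫ (‖P‖² + ‖Q‖²)` by
`‖P t‖ ‖Q t‖` plus terms linear in `m`; feeding this into the two integral equations (with
Cauchy–Schwarz to pass from `∫ (‖P‖² + ‖Q‖²)` to `∫ (‖P‖ + ‖Q‖)`) gives
`sup (‖P‖ + ‖Q‖) ≤ K (‖P t‖ + m)` with `K` depending only on `C₁`, `C₂`, `T`. With `m = 0`
this is Lipschitz dependence on the initial point; against the zero solution of the system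
recentred at the origin it is linear growth in `‖x‖`. For `t₁ ≤ t₂`, the solution started at
`(t₁, x)` restricted to `[t₂, T]` is the solution started at `(t₂, X^{t₁,x}(t₂))`, and
`‖X^{t₁,x}(t₂) - x‖ ≤ ∫_{t₁}^{t₂} ‖f‖ = O((1 + ‖x‖)(t₂ - t₁))`; squaring, with `t₂ - t₁ ≤ T`,
gives the claim.
-/

open MeasureTheory Set intervalIntegral RealInnerProductSpace

noncomputable section

section Calculus

variable {E : Type*} [NormedAddCommGroup E] [InnerProductSpace ℝ E] {a b : ℝ}

theorem hasDerivAt_of_forall_eq_add_integral_s3 [CompleteSpace E] {F W : ℝ → E} {w : E}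
    (hF : ContinuousOn F (Icc a b)) (hW : ∀ s ∈ Icc a b, W s = w + ∫ r in a..s, F r)
    {s : ℝ} (hs : s ∈ Ioo a b) : HasDerivAt W (F s) s := by
  have hmem : Icc a b ∈ nhds s := Icc_mem_nhds hs.1 hs.2
  have hFi : IntervalIntegrable F volume a s :=
    (hF.mono (Icc_subset_Icc le_rfl hs.2.le)).intervalIntegrable_of_Icc hs.1.le
  have hFm : StronglyMeasurableAtFilter F (nhds s) volume :=
    (hF.mono Ioo_subset_Icc_self).stronglyMeasurableAtFilter isOpen_Ioo s hs
  exact ((integral_hasDerivAt_right hFi hFm (hF.continuousAt hmem)).const_add w)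
    |>.congr_of_eventuallyEq (Filter.eventuallyEq_of_mem hmem hW)

theorem hasDerivAt_of_forall_eq_add_integral_right [CompleteSpace E] {G W : ℝ → E} {w : E}
    (hG : ContinuousOn G (Icc a b)) (hW : ∀ s ∈ Icc a b, W s = w + ∫ r in s..b, G r)
    {s : ℝ} (hs : s ∈ Ioo a b) : HasDerivAt W (-G s) s := by
  have hGi : ∀ u ∈ Icc a b, IntervalIntegrable G volume a u := fun u hu =>
    (hG.mono (Icc_subset_Icc le_rfl hu.2)).intervalIntegrable_of_Icc hu.1
  refine hasDerivAt_of_forall_eq_add_integral_s3 (F := fun r => -G r)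
    (w := w + ∫ r in a..b, G r) hG.neg (fun u hu => ?_) hs
  rw [hW u hu, intervalIntegral.integral_neg,
    ← integral_interval_sub_left (hGi b ⟨hs.1.le.trans hs.2.le, le_rfl⟩) (hGi u hu)]
  abel

theorem inner_sub_inner_le_integral {P Q P' Q' : ℝ → E} {ρ : ℝ → ℝ} (hab : a ≤ b)
    (hP : ContinuousOn P (Icc a b)) (hQ : ContinuousOn Q (Icc a b))
    (hP' : ∀ s ∈ Ioo a b, HasDerivAt P (P' s) s) (hQ' : ∀ s ∈ Ioo a b, HasDerivAt Q (Q' s) s)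
    (hρ : ContinuousOn ρ (Icc a b)) (hle : ∀ s ∈ Ioo a b, ⟪P s, Q' s⟫ + ⟪P' s, Q s⟫ ≤ ρ s) :
    ⟪P b, Q b⟫ - ⟪P a, Q a⟫ ≤ ∫ s in a..b, ρ s :=
  sub_le_integral_of_hasDeriv_right_of_le hab (hP.inner hQ)
    (fun s hs => ((hP' s hs).inner ℝ (hQ' s hs)).hasDerivWithinAt) hρ.integrableOn_Icc hle

theorem norm_integral_le_integral_of_Icc_subset {F : ℝ → E} {ρ : ℝ → ℝ} {c d : ℝ}
    (hρ : ContinuousOn ρ (Icc a b)) (hFρ : ∀ r ∈ Icc a b, ‖F r‖ ≤ ρ r)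
    (hac : a ≤ c) (hcd : c ≤ d) (hdb : d ≤ b) :
    ‖∫ r in c..d, F r‖ ≤ ∫ r in a..b, ρ r :=
  calc ‖∫ r in c..d, F r‖ ≤ ∫ r in c..d, ρ r :=
        norm_integral_le_of_norm_le hcd
          (ae_of_all _ fun r hr => hFρ r ⟨hac.trans hr.1.le, hr.2.trans hdb⟩)
          ((hρ.mono (Icc_subset_Icc hac hdb)).intervalIntegrable_of_Icc hcd)
    _ ≤ ∫ r in a..b, ρ r :=
        integral_mono_interval hac hcd hdb
          (ae_restrict_of_forall_mem measurableSet_Ioc fun r hr =>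
            (norm_nonneg _).trans (hFρ r (Ioc_subset_Icc_self hr)))
          (hρ.intervalIntegrable_of_Icc (hac.trans (hcd.trans hdb)))

end Calculus

theorem sq_integral_le_mul_integral_sq {w : ℝ → ℝ} {a b : ℝ} (hab : a ≤ b)
    (hw : ContinuousOn w (Icc a b)) :
    (∫ r in a..b, w r) ^ 2 ≤ (b - a) * ∫ r in a..b, w r ^ 2 := by
  have hwi : IntervalIntegrable w volume a b := hw.intervalIntegrable_of_Icc hab
  have hw2i : IntervalIntegrable (fun r => w r ^ 2) volume a b :=
    (hw.pow 2).intervalIntegrable_of_Icc hab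
  -- `∫ (w - c)² ≥ 0` is a quadratic in `c` that is nonnegative everywhere
  have hquad : ∀ c : ℝ,
      0 ≤ (b - a) * (c * c) + (-2 * ∫ r in a..b, w r) * c + ∫ r in a..b, w r ^ 2 := by
    intro c
    have hmono : ∫ r in a..b, 2 * c * w r ≤ ∫ r in a..b, (w r ^ 2 + c ^ 2) :=
      integral_mono_on hab (hwi.const_mul _) (hw2i.add intervalIntegrable_const)
        fun r _ => by nlinarith [sq_nonneg (w r - c)]
    rw [intervalIntegral.integral_const_mul, integral_add hw2i intervalIntegrable_const,
      intervalIntegral.integral_const, smul_eq_mul] at hmono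
    linarith
  have := discrim_le_zero hquad
  rw [discrim] at this
  linarith

theorem sq_integral_add_le {u v : ℝ → ℝ} {a b : ℝ} (hab : a ≤ b) (hu : ContinuousOn u (Icc a b))
    (hv : ContinuousOn v (Icc a b)) :
    (∫ r in a..b, (u r + v r)) ^ 2 ≤ 2 * (b - a) * ∫ r in a..b, (u r ^ 2 + v r ^ 2) := by
  have hsq : ∫ r in a..b, (u r + v r) ^ 2 ≤ 2 * ∫ r in a..b, (u r ^ 2 + v r ^ 2) := by
    rw [← intervalIntegral.integral_const_mul]
    exact integral_mono_on hab (((hu.add hv).pow 2).intervalIntegrable_of_Icc hab)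
      ((((hu.pow 2).add (hv.pow 2)).intervalIntegrable_of_Icc hab).const_mul 2)
      fun r _ => by nlinarith [sq_nonneg (u r - v r)]
  have hcs := sq_integral_le_mul_integral_sq (w := fun r => u r + v r) hab (hu.add hv)
  beta_reduce at hcs
  linarith [mul_le_mul_of_nonneg_left hsq (sub_nonneg.2 hab)]

theorem le_mul_of_sq_le_mul_add {u D α β : ℝ} (hu : 0 ≤ u) (hD : 0 ≤ D) (hα : 0 ≤ α)
    (hβ : 0 ≤ β) (h : u ^ 2 ≤ α * D * u + β * D ^ 2) : u ≤ (α + β + 1) * D := by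
  by_contra! hlt
  have hDu : D < u := by nlinarith
  nlinarith [mul_le_mul_of_nonneg_left hDu.le (mul_nonneg hβ hD), mul_nonneg hα hD]

theorem add_le_of_energy_estimate {C₁ C₂ L p m e i q v : ℝ} (hC₁ : 0 ≤ C₁) (hC₂ : 0 < C₂)
    (hL : 0 ≤ L) (hp : 0 ≤ p) (hm : 0 ≤ m) (he : 0 ≤ e) (hi : 0 ≤ i) (hq : 0 ≤ q)
    (henergy : C₂ * e ^ 2 + C₂ * q ≤ p * v + m * e + m * i)
    (hv : v ≤ C₁ * e + C₁ * i + m * (1 + L)) (hcs : i ^ 2 ≤ 2 * L * q) :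
    e + i ≤ ((2 + 4 * L) * (C₁ + 2 + L) / C₂ + 1) * (p + m) := by
  have hsq : (e + i) ^ 2 ≤ (2 + 4 * L) * (e ^ 2 + q) := by
    nlinarith [sq_nonneg (e - i), mul_nonneg hL (sq_nonneg e)]
  have hlin : C₂ * (e ^ 2 + q) ≤ (C₁ + 1) * (p + m) * (e + i) + (1 + L) * (p + m) ^ 2 := by
    have hpv := mul_le_mul_of_nonneg_left hv hp
    have hpm : p * m * (1 + L) ≤ (1 + L) * (p + m) ^ 2 := by
      nlinarith [mul_nonneg (by linarith : (0:ℝ) ≤ 1 + L) (add_nonneg (sq_nonneg p) (sq_nonneg m))]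
    nlinarith [mul_nonneg hC₁ (mul_nonneg hm (add_nonneg he hi)), mul_nonneg hp (add_nonneg he hi)]
  have key := le_mul_of_sq_le_mul_add (add_nonneg he hi) (add_nonneg hp hm)
    (α := (2 + 4 * L) * (C₁ + 1) / C₂) (β := (2 + 4 * L) * (1 + L) / C₂) (by positivity)
    (by positivity) (by
      rw [div_mul_eq_mul_div, div_mul_eq_mul_div, div_mul_eq_mul_div, ← add_div, le_div_iff₀ hC₂]
      nlinarith [mul_le_mul_of_nonneg_left hlin (by positivity : (0:ℝ) ≤ 2 + 4 * L)])
  calc e + i ≤ _ := key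
    _ = _ := by ring

theorem sq_le_of_le_mul_of_le {e a w d L : ℝ} (he : 0 ≤ e) (h : e ≤ a * (1 + w) * d)
    (hd : 0 ≤ d) (hdL : d ≤ L) : e ^ 2 ≤ 2 * L * a ^ 2 * d * (1 + w ^ 2) := by
  have hw : (1 + w) ^ 2 ≤ 2 * (1 + w ^ 2) := by nlinarith [sq_nonneg (1 - w)]
  calc e ^ 2 ≤ (a * (1 + w) * d) ^ 2 := pow_le_pow_left₀ he h 2
    _ = a ^ 2 * d * ((1 + w) ^ 2 * d) := by ring
    _ ≤ a ^ 2 * d * (2 * (1 + w ^ 2) * L) := by gcongr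
    _ = 2 * L * a ^ 2 * d * (1 + w ^ 2) := by ring

def aprioriConst (C₁ C₂ L : ℝ) : ℝ :=
  1 + 2 * L + 2 * C₁ * ((2 + 4 * L) * (C₁ + 2 + L) / C₂ + 1)

theorem one_le_aprioriConst {C₁ C₂ L : ℝ} (hC₁ : 0 ≤ C₁) (hC₂ : 0 < C₂) (hL : 0 ≤ L) :
    1 ≤ aprioriConst C₁ C₂ L := by
  unfold aprioriConst
  have : 0 ≤ 2 * C₁ * ((2 + 4 * L) * (C₁ + 2 + L) / C₂ + 1) := by positivity
  linarith

section AprioriEstimate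

variable {E : Type*} [NormedAddCommGroup E] [InnerProductSpace ℝ E]

theorem inner_add_sub_inner_add_le {P Q F G δF δG : E} {C₂ m : ℝ}
    (hmono : ⟪-G, P⟫ + ⟪F, Q⟫ ≤ -C₂ * (‖P‖ ^ 2 + ‖Q‖ ^ 2)) (hδF : ‖δF‖ ≤ m) (hδG : ‖δG‖ ≤ m) :
    ⟪F + δF, Q⟫ - ⟪G + δG, P⟫ ≤ -C₂ * (‖P‖ ^ 2 + ‖Q‖ ^ 2) + m * (‖P‖ + ‖Q‖) := by
  have hF := (real_inner_le_norm δF Q).trans (mul_le_mul_of_nonneg_right hδF (norm_nonneg Q))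
  have hG := (neg_abs_le _).trans' (neg_le_neg ((abs_real_inner_le_norm δG P).trans
    (mul_le_mul_of_nonneg_right hδG (norm_nonneg P))))
  rw [inner_neg_left] at hmono
  rw [inner_add_left, inner_add_left]
  linarith

theorem le_inner_add {P H δ : E} {C₂ m : ℝ} (hmono : C₂ * ‖P‖ ^ 2 ≤ ⟪H, P⟫) (hδ : ‖δ‖ ≤ m) :
    C₂ * ‖P‖ ^ 2 - m * ‖P‖ ≤ ⟪P, H + δ⟫ := by
  have := (neg_abs_le _).trans' (neg_le_neg ((abs_real_inner_le_norm P δ).trans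
    (mul_le_mul_of_nonneg_left hδ (norm_nonneg P))))
  rw [inner_add_right, real_inner_comm]
  linarith

theorem energy_estimate [CompleteSpace E] {t T C₂ m : ℝ} {P Q F G : ℝ → E} (htT : t ≤ T)
    (hPc : ContinuousOn P (Icc t T)) (hQc : ContinuousOn Q (Icc t T))
    (hFc : ContinuousOn F (Icc t T)) (hGc : ContinuousOn G (Icc t T))
    (hP : ∀ s ∈ Icc t T, P s = P t + ∫ r in t..s, F r)
    (hQ : ∀ s ∈ Icc t T, Q s = Q T + ∫ r in s..T, G r)
    (hmono : ∀ s ∈ Icc t T, ⟪F s, Q s⟫ - ⟪G s, P s⟫ ≤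
      -C₂ * (‖P s‖ ^ 2 + ‖Q s‖ ^ 2) + m * (‖P s‖ + ‖Q s‖))
    (hPQT : C₂ * ‖P T‖ ^ 2 - m * ‖P T‖ ≤ ⟪P T, Q T⟫) :
    C₂ * ‖P T‖ ^ 2 + C₂ * ∫ r in t..T, (‖P r‖ ^ 2 + ‖Q r‖ ^ 2) ≤
      ‖P t‖ * ‖Q t‖ + m * ‖P T‖ + m * ∫ r in t..T, (‖P r‖ + ‖Q r‖) := by
  have hwc : ContinuousOn (fun r => ‖P r‖ + ‖Q r‖) (Icc t T) := hPc.norm.add hQc.norm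
  have hw2c : ContinuousOn (fun r => ‖P r‖ ^ 2 + ‖Q r‖ ^ 2) (Icc t T) :=
    (hPc.norm.pow 2).add (hQc.norm.pow 2)
  have h := inner_sub_inner_le_integral htT hPc hQc
    (fun s hs => hasDerivAt_of_forall_eq_add_integral_s3 hFc hP hs)
    (fun s hs => hasDerivAt_of_forall_eq_add_integral_right hGc hQ hs)
    (ρ := fun r => -C₂ * (‖P r‖ ^ 2 + ‖Q r‖ ^ 2) + m * (‖P r‖ + ‖Q r‖))
    ((continuousOn_const.mul hw2c).add (continuousOn_const.mul hwc))
    (fun s hs => by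
      have := hmono s (Ioo_subset_Icc_self hs)
      rw [inner_neg_right, real_inner_comm (G s)] at *
      linarith)
  rw [integral_add ((hw2c.intervalIntegrable_of_Icc htT).const_mul _)
    ((hwc.intervalIntegrable_of_Icc htT).const_mul _), intervalIntegral.integral_const_mul,
    intervalIntegral.integral_const_mul] at h
  nlinarith [real_inner_le_norm (P t) (Q t)]

theorem norm_add_norm_le_aprioriConst [CompleteSpace E] {t T L C₁ C₂ m : ℝ} {P Q F G : ℝ → E}
    (htT : t ≤ T) (hL : T - t ≤ L) (hC₁ : 0 ≤ C₁) (hC₂ : 0 < C₂) (hm : 0 ≤ m)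
    (hPc : ContinuousOn P (Icc t T)) (hQc : ContinuousOn Q (Icc t T))
    (hFc : ContinuousOn F (Icc t T)) (hGc : ContinuousOn G (Icc t T))
    (hP : ∀ s ∈ Icc t T, P s = P t + ∫ r in t..s, F r)
    (hQ : ∀ s ∈ Icc t T, Q s = Q T + ∫ r in s..T, G r)
    (hF : ∀ s ∈ Icc t T, ‖F s‖ ≤ C₁ * (‖P s‖ + ‖Q s‖) + m)
    (hG : ∀ s ∈ Icc t T, ‖G s‖ ≤ C₁ * (‖P s‖ + ‖Q s‖) + m)
    (hmono : ∀ s ∈ Icc t T, ⟪F s, Q s⟫ - ⟪G s, P s⟫ ≤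
      -C₂ * (‖P s‖ ^ 2 + ‖Q s‖ ^ 2) + m * (‖P s‖ + ‖Q s‖))
    (hQT : ‖Q T‖ ≤ C₁ * ‖P T‖ + m) (hPQT : C₂ * ‖P T‖ ^ 2 - m * ‖P T‖ ≤ ⟪P T, Q T⟫) :
    ∀ s ∈ Icc t T, ‖P s‖ + ‖Q s‖ ≤ aprioriConst C₁ C₂ L * (‖P t‖ + m) := by
  have hL0 : 0 ≤ L := (sub_nonneg.2 htT).trans hL
  have hwc : ContinuousOn (fun r => ‖P r‖ + ‖Q r‖) (Icc t T) := hPc.norm.add hQc.norm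
  have hρc : ContinuousOn (fun r => C₁ * (‖P r‖ + ‖Q r‖) + m) (Icc t T) :=
    (continuousOn_const.mul hwc).add continuousOn_const
  set i := ∫ r in t..T, (‖P r‖ + ‖Q r‖)
  set q := ∫ r in t..T, (‖P r‖ ^ 2 + ‖Q r‖ ^ 2)
  have hρ : ∫ r in t..T, (C₁ * (‖P r‖ + ‖Q r‖) + m) ≤ C₁ * i + m * L := by
    rw [integral_add ((hwc.intervalIntegrable_of_Icc htT).const_mul C₁) intervalIntegrable_const,
      intervalIntegral.integral_const_mul, intervalIntegral.integral_const, smul_eq_mul]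
    nlinarith
  have hPs : ∀ s ∈ Icc t T, ‖P s‖ ≤ ‖P t‖ + (C₁ * i + m * L) := fun s hs => by
    rw [hP s hs]
    exact (norm_add_le _ _).trans (add_le_add le_rfl
      ((norm_integral_le_integral_of_Icc_subset hρc hF le_rfl hs.1 hs.2).trans hρ))
  have hQs : ∀ s ∈ Icc t T, ‖Q s‖ ≤ C₁ * ‖P T‖ + m + (C₁ * i + m * L) := fun s hs => by
    rw [hQ s hs]
    exact (norm_add_le _ _).trans (add_le_add hQT
      ((norm_integral_le_integral_of_Icc_subset hρc hG hs.1 hs.2 le_rfl).trans hρ))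
  have hi : 0 ≤ i := integral_nonneg htT fun r _ => by positivity
  have hq : 0 ≤ q := integral_nonneg htT fun r _ => by positivity
  have hcs : i ^ 2 ≤ 2 * L * q := by
    nlinarith [sq_integral_add_le htT hPc.norm hQc.norm, mul_le_mul_of_nonneg_right hL hq]
  have hu := add_le_of_energy_estimate hC₁ hC₂ hL0 (norm_nonneg _) hm (norm_nonneg _) hi hq
    (energy_estimate htT hPc hQc hFc hGc hP hQ hmono hPQT)
    ((hQs t ⟨le_rfl, htT⟩).trans_eq (by ring)) hcs
  intro s hs
  unfold aprioriConst
  nlinarith [hPs s hs, hQs s hs, mul_le_mul_of_nonneg_left hu (by positivity : (0:ℝ) ≤ 2 * C₁),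
    mul_nonneg hL0 (norm_nonneg (P t)), mul_nonneg hC₁ (norm_nonneg (P T))]

end AprioriEstimate

theorem continuousOn_along_of_continuousOn_uncurry {α β : Type*} [TopologicalSpace α]
    [TopologicalSpace β] {φ : ℝ → α → α → β} {t T : ℝ}
    (hφ : ContinuousOn (fun p : ℝ × α × α => φ p.1 p.2.1 p.2.2) (Icc 0 T ×ˢ (univ ×ˢ univ)))
    (ht : 0 ≤ t) {X Y : ℝ → α} (hX : ContinuousOn X (Icc t T)) (hY : ContinuousOn Y (Icc t T)) :
    ContinuousOn (fun r => φ r (X r) (Y r)) (Icc t T) :=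
  hφ.comp (continuousOn_id.prodMk (hX.prodMk hY)) fun _ hr =>
    ⟨⟨ht.trans hr.1, hr.2⟩, mem_univ _, mem_univ _⟩

namespace IsFBSol

variable {n : ℕ} {T t : ℝ} {f g : ℝ → Vec n → Vec n → Vec n} {h : Vec n → Vec n} {x : Vec n}
  {X Y : ℝ → Vec n}

theorem apply_left (hs : IsFBSol T f g h t x X Y) (htT : t ≤ T) : X t = x := by
  simpa using hs.2.2.1 t ⟨le_rfl, htT⟩

theorem apply_right (hs : IsFBSol T f g h t x X Y) (htT : t ≤ T) : Y T = h (X T) := by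
  simpa using hs.2.2.2 T ⟨htT, le_rfl⟩

theorem restrict (hs : IsFBSol T f g h t x X Y) {t' : ℝ} (htt' : t ≤ t') (ht'T : t' ≤ T)
    (hF : ContinuousOn (fun r => f r (X r) (Y r)) (Icc t T)) : IsFBSol T f g h t' (X t') X Y := by
  obtain ⟨hXc, hYc, hXe, hYe⟩ := hs
  have hsub : Icc t' T ⊆ Icc t T := Icc_subset_Icc htt' le_rfl
  refine ⟨hXc.mono hsub, hYc.mono hsub, fun u hu => ?_, fun u hu => hYe u (hsub hu)⟩
  rw [hXe u (hsub hu), hXe t' ⟨htt', ht'T⟩, add_assoc, integral_add_adjacent_intervals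
    ((hF.mono (Icc_subset_Icc le_rfl ht'T)).intervalIntegrable_of_Icc htt')
    ((hF.mono (Icc_subset_Icc htt' hu.2)).intervalIntegrable_of_Icc hu.1)]

end IsFBSol

structure IsMonotoneFBSystem {n : ℕ} (T C₁ C₂ : ℝ) (f g : ℝ → Vec n → Vec n → Vec n)
    (h : Vec n → Vec n) : Prop where
  continuousOn_f : ContinuousOn (fun p : ℝ × Vec n × Vec n => f p.1 p.2.1 p.2.2)
    (Icc 0 T ×ˢ (univ ×ˢ univ))
  continuousOn_g : ContinuousOn (fun p : ℝ × Vec n × Vec n => g p.1 p.2.1 p.2.2)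
    (Icc 0 T ×ˢ (univ ×ˢ univ))
  C₁_nonneg : 0 ≤ C₁
  C₂_pos : 0 < C₂
  lipschitz_f : ∀ t ∈ Icc (0:ℝ) T, ∀ x₁ x₂ y₁ y₂ : Vec n,
    ‖f t x₁ y₁ - f t x₂ y₂‖ ≤ C₁ * (‖x₁ - x₂‖ + ‖y₁ - y₂‖)
  lipschitz_g : ∀ t ∈ Icc (0:ℝ) T, ∀ x₁ x₂ y₁ y₂ : Vec n,
    ‖g t x₁ y₁ - g t x₂ y₂‖ ≤ C₁ * (‖x₁ - x₂‖ + ‖y₁ - y₂‖)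
  lipschitz_h : ∀ x₁ x₂ : Vec n, ‖h x₁ - h x₂‖ ≤ C₁ * ‖x₁ - x₂‖
  monotone : ∀ t ∈ Icc (0:ℝ) T, ∀ x₁ x₂ y₁ y₂ : Vec n,
    ⟪-(g t x₁ y₁ - g t x₂ y₂), x₁ - x₂⟫ + ⟪f t x₁ y₁ - f t x₂ y₂, y₁ - y₂⟫
      ≤ -C₂ * (‖x₁ - x₂‖ ^ 2 + ‖y₁ - y₂‖ ^ 2)
  monotone_h : ∀ x₁ x₂ : Vec n, C₂ * ‖x₁ - x₂‖ ^ 2 ≤ ⟪h x₁ - h x₂, x₁ - x₂⟫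

namespace IsMonotoneFBSystem

variable {n : ℕ} {T C₁ C₂ M : ℝ} {f g : ℝ → Vec n → Vec n → Vec n} {h : Vec n → Vec n}

theorem exists_bound_at_zero (H : IsMonotoneFBSystem T C₁ C₂ f g h) :
    ∃ M, (∀ r ∈ Icc (0:ℝ) T, ‖f r 0 0‖ ≤ M) ∧ (∀ r ∈ Icc (0:ℝ) T, ‖g r 0 0‖ ≤ M) ∧ ‖h 0‖ ≤ M := by
  obtain ⟨Mf, hMf⟩ := isCompact_Icc.exists_bound_of_continuousOn
    (continuousOn_along_of_continuousOn_uncurry H.continuousOn_f le_rfl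
      (continuousOn_const (c := (0 : Vec n))) continuousOn_const)
  obtain ⟨Mg, hMg⟩ := isCompact_Icc.exists_bound_of_continuousOn
    (continuousOn_along_of_continuousOn_uncurry H.continuousOn_g le_rfl
      (continuousOn_const (c := (0 : Vec n))) continuousOn_const)
  exact ⟨max (max Mf Mg) ‖h 0‖, fun r hr => (hMf r hr).trans (by simp),
    fun r hr => (hMg r hr).trans (by simp), by simp⟩

theorem norm_f_le (H : IsMonotoneFBSystem T C₁ C₂ f g h) {r : ℝ} (hr : r ∈ Icc 0 T)
    (hf0 : ‖f r 0 0‖ ≤ M) (x y : Vec n) : ‖f r x y‖ ≤ C₁ * (‖x‖ + ‖y‖) + M := by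
  have := H.lipschitz_f r hr x 0 y 0
  rw [sub_zero, sub_zero] at this
  linarith [norm_le_norm_add_norm_sub' (f r x y) (f r 0 0)]

theorem norm_sub_add_norm_sub_le_of_perturbation (H : IsMonotoneFBSystem T C₁ C₂ f g h)
    {f' g' : ℝ → Vec n → Vec n → Vec n} {h' : Vec n → Vec n} {m t : ℝ} (hm : 0 ≤ m)
    (hf' : ∀ r ∈ Icc (0:ℝ) T, ∀ x y, ‖f r x y - f' r x y‖ ≤ m)
    (hg' : ∀ r ∈ Icc (0:ℝ) T, ∀ x y, ‖g r x y - g' r x y‖ ≤ m) (hh' : ∀ x, ‖h x - h' x‖ ≤ m)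
    (ht : t ∈ Icc 0 T) {x₁ x₂ : Vec n} {X₁ Y₁ X₂ Y₂ : ℝ → Vec n}
    (hsol₁ : IsFBSol T f g h t x₁ X₁ Y₁) (hsol₂ : IsFBSol T f' g' h' t x₂ X₂ Y₂)
    (hF₂ : ContinuousOn (fun r => f' r (X₂ r) (Y₂ r)) (Icc t T))
    (hG₂ : ContinuousOn (fun r => g' r (X₂ r) (Y₂ r)) (Icc t T)) :
    ∀ s ∈ Icc t T, ‖X₁ s - X₂ s‖ + ‖Y₁ s - Y₂ s‖ ≤ aprioriConst C₁ C₂ T * (‖x₁ - x₂‖ + m) := by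
  have hmem : ∀ r ∈ Icc t T, r ∈ Icc 0 T := fun r hr => ⟨ht.1.trans hr.1, hr.2⟩
  have hF₁ := continuousOn_along_of_continuousOn_uncurry H.continuousOn_f ht.1 hsol₁.1 hsol₁.2.1
  have hG₁ := continuousOn_along_of_continuousOn_uncurry H.continuousOn_g ht.1 hsol₁.1 hsol₁.2.1
  have hint : ∀ {φ : ℝ → Vec n}, ContinuousOn φ (Icc t T) → ∀ {a b}, t ≤ a → a ≤ b → b ≤ T →
      IntervalIntegrable φ volume a b := fun hφ _ _ ha hab hb =>
    (hφ.mono (Icc_subset_Icc ha hb)).intervalIntegrable_of_Icc hab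
  rw [← hsol₁.apply_left ht.2, ← hsol₂.apply_left ht.2]
  refine norm_add_norm_le_aprioriConst (L := T) (P := fun r => X₁ r - X₂ r)
    (Q := fun r => Y₁ r - Y₂ r) (F := fun r => f r (X₁ r) (Y₁ r) - f' r (X₂ r) (Y₂ r))
    (G := fun r => g r (X₁ r) (Y₁ r) - g' r (X₂ r) (Y₂ r)) ht.2 (by linarith [ht.1])
    H.C₁_nonneg H.C₂_pos hm
    (hsol₁.1.sub hsol₂.1) (hsol₁.2.1.sub hsol₂.2.1) (hF₁.sub hF₂) (hG₁.sub hG₂)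
    (fun s hs => ?_) (fun s hs => ?_) (fun s hs => ?_) (fun s hs => ?_) (fun s hs => ?_) ?_ ?_
  · rw [hsol₁.2.2.1 s hs, hsol₂.2.2.1 s hs, hsol₁.apply_left ht.2, hsol₂.apply_left ht.2,
      integral_sub (hint hF₁ le_rfl hs.1 hs.2) (hint hF₂ le_rfl hs.1 hs.2)]
    abel
  · rw [hsol₁.2.2.2 s hs, hsol₂.2.2.2 s hs, hsol₁.apply_right ht.2, hsol₂.apply_right ht.2,
      integral_sub (hint hG₁ hs.1 hs.2 le_rfl) (hint hG₂ hs.1 hs.2 le_rfl)]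
    abel
  · exact (norm_sub_le_norm_sub_add_norm_sub _ (f s (X₂ s) (Y₂ s)) _).trans
      (add_le_add (H.lipschitz_f s (hmem s hs) _ _ _ _) (hf' s (hmem s hs) _ _))
  · exact (norm_sub_le_norm_sub_add_norm_sub _ (g s (X₂ s) (Y₂ s)) _).trans
      (add_le_add (H.lipschitz_g s (hmem s hs) _ _ _ _) (hg' s (hmem s hs) _ _))
  · rw [← sub_add_sub_cancel (f s (X₁ s) (Y₁ s)) (f s (X₂ s) (Y₂ s)),
      ← sub_add_sub_cancel (g s (X₁ s) (Y₁ s)) (g s (X₂ s) (Y₂ s))]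
    exact inner_add_sub_inner_add_le (H.monotone s (hmem s hs) _ _ _ _) (hf' s (hmem s hs) _ _)
      (hg' s (hmem s hs) _ _)
  · rw [hsol₁.apply_right ht.2, hsol₂.apply_right ht.2]
    exact (norm_sub_le_norm_sub_add_norm_sub _ (h (X₂ T)) _).trans
      (add_le_add (H.lipschitz_h _ _) (hh' _))
  · rw [hsol₁.apply_right ht.2, hsol₂.apply_right ht.2,
      ← sub_add_sub_cancel (h (X₁ T)) (h (X₂ T))]
    exact le_inner_add (H.monotone_h _ _) (hh' _)

theorem norm_sub_add_norm_sub_le (H : IsMonotoneFBSystem T C₁ C₂ f g h) {t : ℝ}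
    (ht : t ∈ Icc 0 T) {x₁ x₂ : Vec n} {X₁ Y₁ X₂ Y₂ : ℝ → Vec n}
    (hsol₁ : IsFBSol T f g h t x₁ X₁ Y₁) (hsol₂ : IsFBSol T f g h t x₂ X₂ Y₂) :
    ∀ s ∈ Icc t T, ‖X₁ s - X₂ s‖ + ‖Y₁ s - Y₂ s‖ ≤ aprioriConst C₁ C₂ T * ‖x₁ - x₂‖ := by
  simpa using H.norm_sub_add_norm_sub_le_of_perturbation le_rfl (by simp) (by simp) (by simp) ht
    hsol₁ hsol₂ (continuousOn_along_of_continuousOn_uncurry H.continuousOn_f ht.1 hsol₂.1 hsol₂.2.1)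
    (continuousOn_along_of_continuousOn_uncurry H.continuousOn_g ht.1 hsol₂.1 hsol₂.2.1)

theorem norm_add_norm_le (H : IsMonotoneFBSystem T C₁ C₂ f g h)
    (hf0 : ∀ r ∈ Icc (0:ℝ) T, ‖f r 0 0‖ ≤ M) (hg0 : ∀ r ∈ Icc (0:ℝ) T, ‖g r 0 0‖ ≤ M)
    (hh0 : ‖h 0‖ ≤ M) {t : ℝ} (ht : t ∈ Icc 0 T) {x : Vec n} {X Y : ℝ → Vec n}
    (hsol : IsFBSol T f g h t x X Y) :
    ∀ s ∈ Icc t T, ‖X s‖ + ‖Y s‖ ≤ aprioriConst C₁ C₂ T * (‖x‖ + M) := by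
  have hzero : IsFBSol T (fun r x y => f r x y - f r 0 0) (fun r x y => g r x y - g r 0 0)
      (fun x => h x - h 0) t 0 0 0 :=
    ⟨continuousOn_const, continuousOn_const, fun _ _ => by simp, fun _ _ => by simp⟩
  simpa using H.norm_sub_add_norm_sub_le_of_perturbation ((norm_nonneg _).trans hh0)
    (fun r hr _ _ => by simpa using hf0 r hr) (fun r hr _ _ => by simpa using hg0 r hr)
    (fun _ => by simpa using hh0) ht hsol hzero (by simpa using continuousOn_const)
    (by simpa using continuousOn_const)

theorem norm_sub_add_norm_sub_le_mul_sub (H : IsMonotoneFBSystem T C₁ C₂ f g h)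
    (hf0 : ∀ r ∈ Icc (0:ℝ) T, ‖f r 0 0‖ ≤ M) (hg0 : ∀ r ∈ Icc (0:ℝ) T, ‖g r 0 0‖ ≤ M)
    (hh0 : ‖h 0‖ ≤ M) {t₁ t₂ : ℝ} (ht₁ : 0 ≤ t₁) (h12 : t₁ ≤ t₂) (ht₂ : t₂ ≤ T) {x : Vec n}
    {X₁ Y₁ X₂ Y₂ : ℝ → Vec n}
    (hsol₁ : IsFBSol T f g h t₁ x X₁ Y₁) (hsol₂ : IsFBSol T f g h t₂ x X₂ Y₂) :
    ∀ s ∈ Icc t₂ T, ‖X₁ s - X₂ s‖ + ‖Y₁ s - Y₂ s‖ ≤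
      aprioriConst C₁ C₂ T * (C₁ * aprioriConst C₁ C₂ T + 1) * (‖x‖ + M) * (t₂ - t₁) := by
  set K := aprioriConst C₁ C₂ T
  have hK : 0 ≤ K := zero_le_one.trans
    (one_le_aprioriConst H.C₁_nonneg H.C₂_pos (ht₁.trans (h12.trans ht₂)))
  have hM : 0 ≤ M := (norm_nonneg _).trans hh0
  have hdrift : ‖X₁ t₂ - x‖ ≤ (C₁ * K * (‖x‖ + M) + M) * (t₂ - t₁) := by
    rw [hsol₁.2.2.1 t₂ ⟨h12, ht₂⟩, add_sub_cancel_left, ← abs_of_nonneg (sub_nonneg.2 h12)]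
    refine norm_integral_le_of_norm_le_const fun r hr => ?_
    rw [uIoc_of_le h12] at hr
    have hr' : r ∈ Icc t₁ T := ⟨hr.1.le, hr.2.trans ht₂⟩
    have hgrowth := H.norm_add_norm_le hf0 hg0 hh0 ⟨ht₁, h12.trans ht₂⟩ hsol₁ r hr'
    have := H.norm_f_le ⟨ht₁.trans hr'.1, hr'.2⟩ (hf0 r ⟨ht₁.trans hr'.1, hr'.2⟩) (X₁ r) (Y₁ r)
    nlinarith [mul_le_mul_of_nonneg_left hgrowth H.C₁_nonneg]
  intro s hs
  calc ‖X₁ s - X₂ s‖ + ‖Y₁ s - Y₂ s‖ ≤ K * ‖X₁ t₂ - x‖ :=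
        H.norm_sub_add_norm_sub_le ⟨ht₁.trans h12, ht₂⟩ (hsol₁.restrict h12 ht₂
          (continuousOn_along_of_continuousOn_uncurry H.continuousOn_f ht₁ hsol₁.1 hsol₁.2.1))
          hsol₂ s hs
    _ ≤ K * ((C₁ * K * (‖x‖ + M) + M) * (t₂ - t₁)) := by gcongr
    _ ≤ K * (C₁ * K + 1) * (‖x‖ + M) * (t₂ - t₁) := by
        nlinarith [mul_nonneg (mul_nonneg hK (sub_nonneg.2 h12)) (norm_nonneg x)]

end IsMonotoneFBSystem

theorem fbsde_continuity_in_t_general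
    (n : ℕ) (T : ℝ) (hT : 0 < T)
    (f g : ℝ → Vec n → Vec n → Vec n) (h : Vec n → Vec n)
    (hf_cont : ContinuousOn (fun p : ℝ × Vec n × Vec n => f p.1 p.2.1 p.2.2)
      (Icc 0 T ×ˢ (univ ×ˢ univ)))
    (hg_cont : ContinuousOn (fun p : ℝ × Vec n × Vec n => g p.1 p.2.1 p.2.2)
      (Icc 0 T ×ˢ (univ ×ˢ univ)))
    (C₁ : ℝ) (hC₁ : 0 < C₁)
    (hf_lip : ∀ t ∈ Icc (0:ℝ) T, ∀ x₁ x₂ y₁ y₂ : Vec n,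
      ‖f t x₁ y₁ - f t x₂ y₂‖ ≤ C₁ * (‖x₁ - x₂‖ + ‖y₁ - y₂‖))
    (hg_lip : ∀ t ∈ Icc (0:ℝ) T, ∀ x₁ x₂ y₁ y₂ : Vec n,
      ‖g t x₁ y₁ - g t x₂ y₂‖ ≤ C₁ * (‖x₁ - x₂‖ + ‖y₁ - y₂‖))
    (hh_lip : ∀ x₁ x₂ : Vec n, ‖h x₁ - h x₂‖ ≤ C₁ * ‖x₁ - x₂‖)
    (C₂ : ℝ) (hC₂ : 0 < C₂)
    (hmono : ∀ t ∈ Icc (0:ℝ) T, ∀ x₁ x₂ y₁ y₂ : Vec n,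
      ⟪-(g t x₁ y₁ - g t x₂ y₂), x₁ - x₂⟫ + ⟪f t x₁ y₁ - f t x₂ y₂, y₁ - y₂⟫
        ≤ -C₂ * (‖x₁ - x₂‖ ^ 2 + ‖y₁ - y₂‖ ^ 2))
    (hh_mono : ∀ x₁ x₂ : Vec n, C₂ * ‖x₁ - x₂‖ ^ 2 ≤ ⟪h x₁ - h x₂, x₁ - x₂⟫)
    (X Y : ℝ → Vec n → ℝ → Vec n)
    (hsol : ∀ t ∈ Icc (0:ℝ) T, ∀ x : Vec n, IsFBSol T f g h t x (X t x) (Y t x))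
    : ∃ C : ℝ, 0 < C ∧ ∀ t₁ ∈ Icc (0:ℝ) T, ∀ t₂ ∈ Icc (0:ℝ) T, ∀ x : Vec n,
      ∀ s ∈ Icc (max t₁ t₂) T,
      ‖X t₁ x s - X t₂ x s‖ ^ 2 ≤ C * |t₁ - t₂| * (1 + ‖x‖ ^ 2) ∧
      ‖Y t₁ x s - Y t₂ x s‖ ^ 2 ≤ C * |t₁ - t₂| * (1 + ‖x‖ ^ 2) := by
  have H : IsMonotoneFBSystem T C₁ C₂ f g h :=
    ⟨hf_cont, hg_cont, hC₁.le, hC₂, hf_lip, hg_lip, hh_lip, hmono, hh_mono⟩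
  obtain ⟨M, hf0, hg0, hh0⟩ := H.exists_bound_at_zero
  set K := aprioriConst C₁ C₂ T with hK_def
  have hK : 1 ≤ K := one_le_aprioriConst hC₁.le hC₂ hT.le
  have hM : 0 ≤ M := (norm_nonneg _).trans hh0
  refine ⟨2 * T * (K * (C₁ * K + 1) * (1 + M)) ^ 2, by positivity, fun t₁ ht₁ t₂ ht₂ x s hs => ?_⟩
  wlog h12 : t₁ ≤ t₂ generalizing t₁ t₂
  · have := this t₂ ht₂ t₁ ht₁ (by rwa [max_comm]) (le_of_not_ge h12)
    rwa [norm_sub_rev (X t₂ x s), norm_sub_rev (Y t₂ x s), abs_sub_comm] at this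
  have hd := H.norm_sub_add_norm_sub_le_mul_sub hf0 hg0 hh0 ht₁.1 h12 ht₂.2 (hsol t₁ ht₁ x)
    (hsol t₂ ht₂ x) s (by rwa [max_eq_right h12] at hs)
  rw [← hK_def] at hd
  have hKd : 0 ≤ K * (C₁ * K + 1) * (t₂ - t₁) := by
    have : 0 ≤ t₂ - t₁ := sub_nonneg.2 h12
    positivity
  have hbound : ‖X t₁ x s - X t₂ x s‖ + ‖Y t₁ x s - Y t₂ x s‖ ≤
      K * (C₁ * K + 1) * (1 + M) * (1 + ‖x‖) * (t₂ - t₁) :=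
    hd.trans (by nlinarith [mul_nonneg hKd (mul_nonneg hM (norm_nonneg x))])
  rw [abs_sub_comm, abs_of_nonneg (sub_nonneg.2 h12)]
  constructor <;> refine sq_le_of_le_mul_of_le (norm_nonneg _) ?_ (sub_nonneg.2 h12)
    (by linarith [ht₁.1, ht₂.2])
  · linarith [norm_nonneg (Y t₁ x s - Y t₂ x s)]
  · linarith [norm_nonneg (X t₁ x s - X t₂ x s)]

/-- Deterministic version of the continuity-in-`t` estimate (Lemma 3 of the paper, ε → 0):
there is a constant `C > 0` independent of `t₁, t₂, x` such that
`sup_{s∈[t₁∨t₂,T]} ‖X^{t₁,x}(s) − X^{t₂,x}(s)‖² ≤ C|t₁−t₂|(1+‖x‖²)` and likewise for `Y`. -/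
theorem fbsde_continuity_in_t
    (n : ℕ) (hn : 1 ≤ n) (T : ℝ) (hT : 0 < T)
    (f g : ℝ → Vec n → Vec n → Vec n) (h : Vec n → Vec n)
    (hf_cont : ContinuousOn (fun p : ℝ × Vec n × Vec n => f p.1 p.2.1 p.2.2)
      (Icc 0 T ×ˢ (univ ×ˢ univ)))
    (hg_cont : ContinuousOn (fun p : ℝ × Vec n × Vec n => g p.1 p.2.1 p.2.2)
      (Icc 0 T ×ˢ (univ ×ˢ univ)))
    (hh_cont : Continuous h)
    (C₁ : ℝ) (hC₁ : 0 < C₁)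
    (hf_lip : ∀ t ∈ Icc (0:ℝ) T, ∀ x₁ x₂ y₁ y₂ : Vec n,
      ‖f t x₁ y₁ - f t x₂ y₂‖ ≤ C₁ * (‖x₁ - x₂‖ + ‖y₁ - y₂‖))
    (hg_lip : ∀ t ∈ Icc (0:ℝ) T, ∀ x₁ x₂ y₁ y₂ : Vec n,
      ‖g t x₁ y₁ - g t x₂ y₂‖ ≤ C₁ * (‖x₁ - x₂‖ + ‖y₁ - y₂‖))
    (hh_lip : ∀ x₁ x₂ : Vec n, ‖h x₁ - h x₂‖ ≤ C₁ * ‖x₁ - x₂‖)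
    (C₂ : ℝ) (hC₂ : 0 < C₂)
    (hmono : ∀ t ∈ Icc (0:ℝ) T, ∀ x₁ x₂ y₁ y₂ : Vec n,
      ⟪-(g t x₁ y₁ - g t x₂ y₂), x₁ - x₂⟫ + ⟪f t x₁ y₁ - f t x₂ y₂, y₁ - y₂⟫
        ≤ -C₂ * (‖x₁ - x₂‖ ^ 2 + ‖y₁ - y₂‖ ^ 2))
    (hh_mono : ∀ x₁ x₂ : Vec n, C₂ * ‖x₁ - x₂‖ ^ 2 ≤ ⟪h x₁ - h x₂, x₁ - x₂⟫)
    (X Y : ℝ → Vec n → ℝ → Vec n)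
    (hsol : ∀ t ∈ Icc (0:ℝ) T, ∀ x : Vec n, IsFBSol T f g h t x (X t x) (Y t x))
    (huniq : ∀ t ∈ Icc (0:ℝ) T, ∀ x : Vec n, ∀ X' Y' : ℝ → Vec n,
      IsFBSol T f g h t x X' Y' → EqOn X' (X t x) (Icc t T) ∧ EqOn Y' (Y t x) (Icc t T))
    : ∃ C : ℝ, 0 < C ∧ ∀ t₁ ∈ Icc (0:ℝ) T, ∀ t₂ ∈ Icc (0:ℝ) T, ∀ x : Vec n,
      ∀ s ∈ Icc (max t₁ t₂) T,
      ‖X t₁ x s - X t₂ x s‖ ^ 2 ≤ C * |t₁ - t₂| * (1 + ‖x‖ ^ 2) ∧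
      ‖Y t₁ x s - Y t₂ x s‖ ^ 2 ≤ C * |t₁ - t₂| * (1 + ‖x‖ ^ 2) :=
  fbsde_continuity_in_t_general n T hT f g h hf_cont hg_cont C₁ hC₁ hf_lip hg_lip hh_lip C₂ hC₂
    hmono hh_mono X Y hsol
end
end
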